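/- arXiv:2505.14847 — 9 statements merged into one kernel-verified Lean document; each statement's English description precedes it below -/
import Mathlib

section
/- Let Γ = (p^(1), p^(2), A) be a two-player game and γ ∈ A^r a goal sequence with goal values v_γ^(i) = (1/r)∑_{j=1}^r p^(i)(γ_j). Suppose there exists an action pair a ∈ A such that d_a^(1) < v_γ^(1) and d_a^(2) < v_γ^(2), where d_a^(i) is the maximum payoff player i can get by unilaterally deviating from a. Then there exist T ∈ ℕ and β₀ ∈ (0,1) such that for all β ∈ (β₀, 1), the sequence that repeats a for T timesteps and then repeats γ forever is stable. -/
/-!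
Statement 1: if some action pair `a` has both deviation payoffs strictly below the
corresponding goal values of a goal sequence `γ`, then for some hazing length `T`
and all sufficiently large discount factors `β`, repeating `a` for `T` steps and
then cycling through `γ` forever is a stable sequence.
-/

namespace Stmt1

/-- Stability of a sequence: no player can profit by deviating once (including
"deviating" to their own prescribed action, i.e. restarting), after which the
sequence restarts from the beginning. -/
def IsStable {A1 A2 : Type*} (β : ℝ) (p1 p2 : A1 × A2 → ℤ) (σ : ℕ → A1 × A2) : Prop :=
  (∀ (k : ℕ) (a : A1),
      (∑ t ∈ Finset.range k, β ^ t * (p1 (σ t) : ℝ)) + β ^ k * (p1 (a, (σ k).2) : ℝ) +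
          β ^ (k + 1) * ∑' t : ℕ, β ^ t * (p1 (σ t) : ℝ) ≤
        ∑' t : ℕ, β ^ t * (p1 (σ t) : ℝ)) ∧
  (∀ (k : ℕ) (b : A2),
      (∑ t ∈ Finset.range k, β ^ t * (p2 (σ t) : ℝ)) + β ^ k * (p2 ((σ k).1, b) : ℝ) +
          β ^ (k + 1) * ∑' t : ℕ, β ^ t * (p2 (σ t) : ℝ) ≤
        ∑' t : ℕ, β ^ t * (p2 (σ t) : ℝ))

/-- Deviation payoff of player 1 at action pair `a`. -/
def d1 {A1 A2 : Type*} [Fintype A1] [Nonempty A1] (p1 : A1 × A2 → ℤ) (a : A1 × A2) : ℤ :=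
  Finset.univ.sup' Finset.univ_nonempty fun x => p1 (x, a.2)

/-- Deviation payoff of player 2 at action pair `a`. -/
def d2 {A1 A2 : Type*} [Fintype A2] [Nonempty A2] (p2 : A1 × A2 → ℤ) (a : A1 × A2) : ℤ :=
  Finset.univ.sup' Finset.univ_nonempty fun y => p2 (a.1, y)

open Filter Set Finset Topology
open Fin.NatCast

/-- The hazing-then-cycle payoff stream. -/
def pp (r : ℕ) [NeZero r] (T : ℕ) (q : Fin r → ℤ) (c : ℤ) (t : ℕ) : ℤ :=
  if t < T then c else q ((t - T : ℕ) : Fin r)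

lemma summable_aux {β : ℝ} (hβ0 : 0 ≤ β) (hβ1 : β < 1) (f : ℕ → ℝ) (C : ℝ)
    (hf : ∀ t, |f t| ≤ C) : Summable fun t => β ^ t * f t := by
  apply Summable.of_norm_bounded
    ((summable_geometric_of_lt_one hβ0 hβ1).mul_right C)
  intro t
  rw [Real.norm_eq_abs, abs_mul, abs_pow, abs_of_nonneg hβ0]
  exact mul_le_mul_of_nonneg_left (hf t) (pow_nonneg hβ0 t)

lemma abs_le_sum_abs {r : ℕ} (q : Fin r → ℝ) (i : Fin r) : |q i| ≤ ∑ m, |q m| :=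
  Finset.single_le_sum (f := fun m => |q m|) (fun m _ => abs_nonneg _) (Finset.mem_univ i)

lemma sum_shift {r : ℕ} [NeZero r] (q : Fin r → ℝ) (j : Fin r) :
    ∑ m : Fin r, q (j + m) = ∑ m : Fin r, q m :=
  Fintype.sum_equiv (Equiv.addLeft j) _ _ (fun _ => rfl)

lemma one_sub_pow_ne {β : ℝ} (hβ : β ∈ Set.Ioo (0:ℝ) 1) {r : ℕ} (hr : 0 < r) :
    (1 : ℝ) - β ^ r ≠ 0 := by
  have := pow_lt_one₀ hβ.1.le hβ.2 hr.ne'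
  linarith

lemma tsum_periodic {r : ℕ} [NeZero r] (hr : 0 < r) (q : Fin r → ℝ) {β : ℝ}
    (hβ : β ∈ Set.Ioo (0:ℝ) 1) (j : Fin r) :
    ∑' t : ℕ, β ^ t * q (j + (t : Fin r))
      = (∑ m : Fin r, β ^ (m : ℕ) * q (j + m)) / (1 - β ^ r) := by
  obtain ⟨hβ0, hβ1⟩ := hβ
  have hs : Summable fun t : ℕ => β ^ t * q (j + (t : Fin r)) :=
    summable_aux hβ0.le hβ1 _ (∑ m, |q m|) (fun t => abs_le_sum_abs q _)
  have hsplit := Summable.sum_add_tsum_nat_add r hs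
  have h2 : ∑' t : ℕ, β ^ (t + r) * q (j + ((t + r : ℕ) : Fin r))
      = β ^ r * ∑' t : ℕ, β ^ t * q (j + (t : Fin r)) := by
    rw [tsum_congr (f := fun t : ℕ => β ^ (t + r) * q (j + ((t + r : ℕ) : Fin r)))
      (g := fun t : ℕ => β ^ r * (β ^ t * q (j + (t : Fin r)))) ?_, tsum_mul_left]
    intro t
    simp only [Nat.cast_add, Fin.natCast_self, add_zero, pow_add]
    ring
  have hhead : ∑ t ∈ Finset.range r, β ^ t * q (j + (t : Fin r))
      = ∑ m : Fin r, β ^ (m : ℕ) * q (j + m) := by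
    rw [← Fin.sum_univ_eq_sum_range (fun t => β ^ t * q (j + (t : Fin r))) r]
    exact Finset.sum_congr rfl (fun m _ => by rw [Fin.cast_val_eq_self])
  have hne : (1 : ℝ) - β ^ r ≠ 0 := one_sub_pow_ne ⟨hβ0, hβ1⟩ hr
  rw [hhead, h2] at hsplit
  rw [eq_div_iff hne]
  nlinarith [hsplit]

noncomputable def Egs (n : ℕ) (β : ℝ) : ℝ := ∑ i ∈ Finset.range n, β ^ i

noncomputable def Qp {r : ℕ} [NeZero r] (q : Fin r → ℤ) (j : Fin r) (β : ℝ) : ℝ :=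
  ∑ m : Fin r, β ^ (m : ℕ) * (q (j + m) : ℝ)

lemma tendsto_Egs (n : ℕ) : Tendsto (Egs n) (𝓝[<] (1:ℝ)) (𝓝 (n : ℝ)) := by
  have h : Continuous (Egs n) := continuous_finset_sum _ (fun i _ => continuous_pow i)
  have h2 : Tendsto (Egs n) (𝓝[<] (1:ℝ)) (𝓝 (Egs n 1)) :=
    (h.tendsto 1).mono_left nhdsWithin_le_nhds
  simpa [Egs] using h2

lemma tendsto_Qp {r : ℕ} [NeZero r] (q : Fin r → ℤ) (j : Fin r) :
    Tendsto (Qp q j) (𝓝[<] (1:ℝ)) (𝓝 (∑ m, (q m : ℝ))) := by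
  have h : Continuous (Qp q j) :=
    continuous_finset_sum _ (fun i _ => (continuous_pow _).mul continuous_const)
  have h2 : Tendsto (Qp q j) (𝓝[<] (1:ℝ)) (𝓝 (Qp q j 1)) :=
    (h.tendsto 1).mono_left nhdsWithin_le_nhds
  have h3 : Qp q j 1 = ∑ m, (q m : ℝ) := by
    rw [Qp]
    simp only [one_pow, one_mul]
    exact sum_shift (fun i => (q i : ℝ)) j
  rwa [h3] at h2

lemma ev_Ioo : ∀ᶠ β in 𝓝[<] (1:ℝ), β ∈ Set.Ioo (0:ℝ) 1 :=
  Ioo_mem_nhdsLT_of_mem (by constructor <;> norm_num)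

lemma geom_factor {β : ℝ} (n : ℕ) : 1 - β ^ n = Egs n β * (1 - β) := by
  have h := geom_sum_mul β n
  rw [Egs]
  nlinarith [h]

lemma tendsto_ratio (r : ℕ) (hr : 0 < r) (s : ℕ) :
    Tendsto (fun β : ℝ => (1 - β ^ s) / (1 - β ^ r)) (𝓝[<] (1:ℝ)) (𝓝 ((s : ℝ) / r)) := by
  have hrne : ((r : ℝ)) ≠ 0 := Nat.cast_ne_zero.mpr hr.ne'
  have h := (tendsto_Egs s).div (tendsto_Egs r) hrne
  refine Tendsto.congr' ?_ h
  filter_upwards [ev_Ioo] with β hβ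
  have hb : (1:ℝ) - β ≠ 0 := by have := hβ.2; intro hc; linarith [sub_eq_zero.mp hc]
  rw [geom_factor s, geom_factor r, mul_div_mul_right _ _ hb]
  rfl




lemma tendsto_Qdiff {r : ℕ} [NeZero r] (hr : 0 < r) (q : Fin r → ℤ) (j : Fin r) :
    Tendsto (fun β : ℝ => (Qp q j β - Qp q 0 β) / (1 - β ^ r)) (𝓝[<] (1:ℝ))
      (𝓝 (∑ m : Fin r, (-(((m : ℕ) : ℝ) / r)) * ((q (j + m) : ℝ) - (q m : ℝ)))) := by
  have hrne : ((r : ℝ)) ≠ 0 := Nat.cast_ne_zero.mpr hr.ne'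
  have hF : Tendsto (fun β : ℝ => ∑ m : Fin r,
      (-(Egs (m : ℕ) β / Egs r β)) * ((q (j + m) : ℝ) - (q m : ℝ))) (𝓝[<] (1:ℝ))
      (𝓝 (∑ m : Fin r, (-(((m : ℕ) : ℝ) / r)) * ((q (j + m) : ℝ) - (q m : ℝ)))) := by
    apply tendsto_finset_sum
    intro m _
    exact (((tendsto_Egs (m : ℕ)).div (tendsto_Egs r) hrne).neg).mul_const _
  refine Tendsto.congr' ?_ hF
  filter_upwards [ev_Ioo] with β hβ
  have hb : (1:ℝ) - β ≠ 0 := by have := hβ.2; intro hc; linarith [sub_eq_zero.mp hc]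
  have hEr : Egs r β ≠ 0 := by
    have : (0:ℝ) < Egs r β := by
      rw [Egs]
      exact Finset.sum_pos (fun i _ => pow_pos hβ.1 i) (Finset.nonempty_range_iff.mpr hr.ne')
    linarith
  have hz : ∑ m : Fin r, ((q (j + m) : ℝ) - (q m : ℝ)) = 0 := by
    rw [Finset.sum_sub_distrib, sum_shift (fun i => (q i : ℝ)) j, sub_self]
  have hdiff : Qp q j β - Qp q 0 β
      = ∑ m : Fin r, (β ^ (m : ℕ) - 1) * ((q (j + m) : ℝ) - (q m : ℝ)) := by
    have h1 : Qp q j β - Qp q 0 β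
        = ∑ m : Fin r, β ^ (m : ℕ) * ((q (j + m) : ℝ) - (q m : ℝ)) := by
      rw [Qp, Qp, ← Finset.sum_sub_distrib]
      refine Finset.sum_congr rfl fun m _ => ?_
      rw [zero_add]; ring
    rw [h1]
    have h2 : ∑ m : Fin r, β ^ (m : ℕ) * ((q (j + m) : ℝ) - (q m : ℝ))
        = (∑ m : Fin r, (β ^ (m : ℕ) - 1) * ((q (j + m) : ℝ) - (q m : ℝ)))
          + ∑ m : Fin r, ((q (j + m) : ℝ) - (q m : ℝ)) := by
      rw [← Finset.sum_add_distrib]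
      refine Finset.sum_congr rfl fun m _ => ?_
      ring
    rw [h2, hz, add_zero]
  show ∑ m : Fin r, (-(Egs (m : ℕ) β / Egs r β)) * ((q (j + m) : ℝ) - (q m : ℝ))
      = (Qp q j β - Qp q 0 β) / (1 - β ^ r)
  rw [hdiff, Finset.sum_div]
  refine Finset.sum_congr rfl fun m _ => ?_
  rw [geom_factor r]
  have h3 : (β ^ (m : ℕ) - 1) = -(Egs (m : ℕ) β * (1 - β)) := by
    rw [← geom_factor]; ring
  rw [h3]
  field_simp



lemma summable_pp (r : ℕ) [NeZero r] (T : ℕ) (q : Fin r → ℤ) (c : ℤ) {β : ℝ}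
    (hβ0 : 0 ≤ β) (hβ1 : β < 1) (k0 : ℕ) :
    Summable fun t => β ^ t * ((pp r T q c (k0 + t) : ℤ) : ℝ) := by
  apply summable_aux hβ0 hβ1 _ (|(c : ℝ)| + ∑ m, |((q m : ℤ) : ℝ)|)
  intro t
  rw [pp]
  split
  · exact le_add_of_nonneg_right (Finset.sum_nonneg fun m _ => abs_nonneg _)
  · calc |((q _ : ℤ) : ℝ)| ≤ ∑ m, |((q m : ℤ) : ℝ)| :=
        abs_le_sum_abs (fun i => ((q i : ℤ) : ℝ)) _
      _ ≤ _ := le_add_of_nonneg_left (abs_nonneg _)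

lemma key (r : ℕ) [NeZero r] (hr : 0 < r) (q D : Fin r → ℤ) (c d : ℤ)
    (hcd : (c : ℝ) ≤ (d : ℝ))
    (hdv : (d : ℝ) < (∑ j, (q j : ℝ)) / r)
    (T : ℕ) (hT1 : 0 < T)
    (hT : ∀ j : Fin r, 2 * (∑ m, |(q m : ℝ)|) + (D j : ℝ)
        < (T : ℝ) * ((∑ j, (q j : ℝ)) / r - d) + (∑ j, (q j : ℝ)) / r) :
    ∃ β₀ ∈ Set.Ioo (0:ℝ) 1, ∀ β ∈ Set.Ioo β₀ 1, ∀ k : ℕ, ∀ g : ℤ,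
      (g : ℝ) ≤ (if k < T then (d : ℝ) else (D ((k - T : ℕ) : Fin r) : ℝ)) →
      (g : ℝ) + β * (∑' t : ℕ, β ^ t * ((pp r T q c t : ℤ) : ℝ))
        ≤ ∑' t : ℕ, β ^ t * ((pp r T q c (k + t) : ℤ) : ℝ) := by
  have hrR : (0:ℝ) < r := by exact_mod_cast hr
  have hrne : ((r : ℝ)) ≠ 0 := ne_of_gt hrR
  have e1 : Tendsto (fun β : ℝ => β) (𝓝[<] (1:ℝ)) (𝓝 1) :=
    (continuous_id.tendsto 1).mono_left nhdsWithin_le_nhds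
  have epow : ∀ n : ℕ, Tendsto (fun β : ℝ => β ^ n) (𝓝[<] (1:ℝ)) (𝓝 1) := by
    intro n
    have h : Tendsto (fun β : ℝ => β ^ n) (𝓝[<] (1:ℝ)) (𝓝 ((1:ℝ) ^ n)) :=
      ((continuous_pow n).tendsto 1).mono_left nhdsWithin_le_nhds
    simpa using h
  -- condition A, for k < T
  have hA : ∀ k : ℕ, k < T → ∀ᶠ β in 𝓝[<] (1:ℝ), 0 <
      (c : ℝ) * Egs (T - k) β + β ^ (T - k) * (Qp q 0 β / (1 - β ^ r))
        - β * ((c : ℝ) * Egs T β + β ^ T * (Qp q 0 β / (1 - β ^ r))) - (d : ℝ) := by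
    intro k hk
    have hlim : Tendsto (fun β : ℝ =>
        (c : ℝ) * Egs (T - k) β - β * ((c : ℝ) * Egs T β)
          + (β ^ (T - k) * ((1 - β ^ (k + 1)) / (1 - β ^ r))) * Qp q 0 β - (d : ℝ))
        (𝓝[<] (1:ℝ))
        (𝓝 ((c : ℝ) * ((T - k : ℕ) : ℝ) - 1 * ((c : ℝ) * (T : ℝ))
          + (1 * (((k + 1 : ℕ) : ℝ) / r)) * (∑ m, (q m : ℝ)) - (d : ℝ))) := by
      exact ((((tendsto_const_nhds.mul (tendsto_Egs (T - k))).sub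
        (e1.mul (tendsto_const_nhds.mul (tendsto_Egs T)))).add
        (((epow (T - k)).mul (tendsto_ratio r hr (k + 1))).mul (tendsto_Qp q 0))).sub
        tendsto_const_nhds)
    have hpos : 0 < (c : ℝ) * ((T - k : ℕ) : ℝ) - 1 * ((c : ℝ) * (T : ℝ))
          + (1 * (((k + 1 : ℕ) : ℝ) / r)) * (∑ m, (q m : ℝ)) - (d : ℝ) := by
      have hTk : ((T - k : ℕ) : ℝ) = (T : ℝ) - (k : ℝ) := by
        rw [Nat.cast_sub hk.le]
      rw [hTk]
      push_cast
      have hk0 : (0:ℝ) ≤ (k : ℝ) := Nat.cast_nonneg k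
      have hprod : 0 ≤ (k : ℝ) * ((∑ m, (q m : ℝ)) / r - (c : ℝ)) :=
        mul_nonneg hk0 (by linarith)
      have hkey : ((k : ℝ) + 1) / r * (∑ m, (q m : ℝ))
          = (k : ℝ) * ((∑ m, (q m : ℝ)) / r) + (∑ m, (q m : ℝ)) / r := by ring
      nlinarith [hprod, hdv, hkey]
    have hev := hlim.eventually (eventually_gt_nhds hpos)
    filter_upwards [hev, ev_Ioo] with β h1 h2
    have hne : (1 : ℝ) - β ^ r ≠ 0 := one_sub_pow_ne h2 hr
    have hform : (c : ℝ) * Egs (T - k) β + β ^ (T - k) * (Qp q 0 β / (1 - β ^ r))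
        - β * ((c : ℝ) * Egs T β + β ^ T * (Qp q 0 β / (1 - β ^ r))) - (d : ℝ)
        = (c : ℝ) * Egs (T - k) β - β * ((c : ℝ) * Egs T β)
          + (β ^ (T - k) * ((1 - β ^ (k + 1)) / (1 - β ^ r))) * Qp q 0 β - (d : ℝ) := by
      obtain ⟨m, hm⟩ : ∃ m, T = m + k := ⟨T - k, by omega⟩
      have hmk : T - k = m := by omega
      rw [hmk, hm]
      field_simp
      ring
    rw [hform]
    exact h1
  -- condition B, for k ≥ T, indexed by j
  have hB : ∀ j : Fin r, ∀ᶠ β in 𝓝[<] (1:ℝ), 0 <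
      Qp q j β / (1 - β ^ r)
        - β * ((c : ℝ) * Egs T β + β ^ T * (Qp q 0 β / (1 - β ^ r))) - (D j : ℝ) := by
    intro j
    have hlim : Tendsto (fun β : ℝ =>
        (Qp q j β - Qp q 0 β) / (1 - β ^ r)
          + ((1 - β ^ (T + 1)) / (1 - β ^ r)) * Qp q 0 β
          - β * ((c : ℝ) * Egs T β) - (D j : ℝ)) (𝓝[<] (1:ℝ))
        (𝓝 ((∑ m : Fin r, (-(((m : ℕ) : ℝ) / r)) * ((q (j + m) : ℝ) - (q m : ℝ)))
          + (((T + 1 : ℕ) : ℝ) / r) * (∑ m, (q m : ℝ))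
          - 1 * ((c : ℝ) * (T : ℝ)) - (D j : ℝ))) := by
      exact (((tendsto_Qdiff hr q j).add
        ((tendsto_ratio r hr (T + 1)).mul (tendsto_Qp q 0))).sub
        (e1.mul (tendsto_const_nhds.mul (tendsto_Egs T)))).sub tendsto_const_nhds
    have hpos : 0 < (∑ m : Fin r, (-(((m : ℕ) : ℝ) / r)) * ((q (j + m) : ℝ) - (q m : ℝ)))
          + (((T + 1 : ℕ) : ℝ) / r) * (∑ m, (q m : ℝ))
          - 1 * ((c : ℝ) * (T : ℝ)) - (D j : ℝ) := by
      have hC : -(2 * ∑ m, |(q m : ℝ)|)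
          ≤ ∑ m : Fin r, (-(((m : ℕ) : ℝ) / r)) * ((q (j + m) : ℝ) - (q m : ℝ)) := by
        have hterm : ∀ m : Fin r, -|(q (j + m) : ℝ)| - |(q m : ℝ)|
            ≤ (-(((m : ℕ) : ℝ) / r)) * ((q (j + m) : ℝ) - (q m : ℝ)) := by
          intro m
          have h1 : ((m : ℕ) : ℝ) / r ≤ 1 := by
            rw [div_le_one hrR]
            exact_mod_cast (m.2).le
          have h2 : (0:ℝ) ≤ ((m : ℕ) : ℝ) / r := by positivity
          have h3 : |(q (j + m) : ℝ) - (q m : ℝ)| ≤ |(q (j + m) : ℝ)| + |(q m : ℝ)| :=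
            abs_sub _ _
          have h5 : (((m : ℕ) : ℝ) / r) * ((q (j + m) : ℝ) - (q m : ℝ))
              ≤ (((m : ℕ) : ℝ) / r) * |(q (j + m) : ℝ) - (q m : ℝ)| :=
            mul_le_mul_of_nonneg_left (le_abs_self _) h2
          have h6 : (((m : ℕ) : ℝ) / r) * |(q (j + m) : ℝ) - (q m : ℝ)|
              ≤ 1 * |(q (j + m) : ℝ) - (q m : ℝ)| :=
            mul_le_mul_of_nonneg_right h1 (abs_nonneg _)
          linarith [h3, h5, h6]
        calc -(2 * ∑ m, |(q m : ℝ)|)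
            = ∑ m : Fin r, (-|(q (j + m) : ℝ)| - |(q m : ℝ)|) := by
              rw [Finset.sum_sub_distrib, Finset.sum_neg_distrib,
                sum_shift (fun i => |(q i : ℝ)|) j]
              ring
          _ ≤ _ := Finset.sum_le_sum fun m _ => hterm m
      have hTc : (T : ℝ) * (c : ℝ) ≤ (T : ℝ) * (d : ℝ) :=
        mul_le_mul_of_nonneg_left hcd (Nat.cast_nonneg T)
      have hTj := hT j
      have hcast : (((T + 1 : ℕ) : ℝ)) = (T : ℝ) + 1 := by push_cast; ring
      rw [hcast]
      have hdivmul : ((T : ℝ) + 1) / r * (∑ m, (q m : ℝ))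
          = (T : ℝ) * ((∑ m, (q m : ℝ)) / r) + (∑ m, (q m : ℝ)) / r := by ring
      rw [hdivmul]
      nlinarith [hC, hTc, hTj]
    have hev := hlim.eventually (eventually_gt_nhds hpos)
    filter_upwards [hev, ev_Ioo] with β h1 h2
    have hne : (1 : ℝ) - β ^ r ≠ 0 := one_sub_pow_ne h2 hr
    have hform : Qp q j β / (1 - β ^ r)
          - β * ((c : ℝ) * Egs T β + β ^ T * (Qp q 0 β / (1 - β ^ r))) - (D j : ℝ)
        = (Qp q j β - Qp q 0 β) / (1 - β ^ r)
          + ((1 - β ^ (T + 1)) / (1 - β ^ r)) * Qp q 0 β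
          - β * ((c : ℝ) * Egs T β) - (D j : ℝ) := by
      field_simp
      ring
    rw [hform]
    exact h1
  -- combine
  have hallA : ∀ᶠ β in 𝓝[<] (1:ℝ), ∀ k : Fin T, 0 <
      (c : ℝ) * Egs (T - (k : ℕ)) β + β ^ (T - (k : ℕ)) * (Qp q 0 β / (1 - β ^ r))
        - β * ((c : ℝ) * Egs T β + β ^ T * (Qp q 0 β / (1 - β ^ r))) - (d : ℝ) :=
    eventually_all.mpr fun k => hA (k : ℕ) k.2
  have hallB : ∀ᶠ β in 𝓝[<] (1:ℝ), ∀ j : Fin r, 0 <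
      Qp q j β / (1 - β ^ r)
        - β * ((c : ℝ) * Egs T β + β ^ T * (Qp q 0 β / (1 - β ^ r))) - (D j : ℝ) :=
    eventually_all.mpr hB
  have hall := (hallA.and hallB).and ev_Ioo
  rw [Filter.eventually_iff, mem_nhdsLT_iff_exists_Ioo_subset] at hall
  obtain ⟨l0, hl0, hsub⟩ := hall
  refine ⟨max l0 (1/2), ⟨lt_of_lt_of_le (by norm_num) (le_max_right _ _),
    max_lt hl0 (by norm_num)⟩, ?_⟩
  intro β hβ
  obtain ⟨⟨hΦA, hΦB⟩, hβ01⟩ := hsub ⟨(le_max_left l0 (1/2)).trans_lt hβ.1, hβ.2⟩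
  obtain ⟨hβ0, hβ1⟩ := hβ01
  intro k g hg
  have hne : (1 : ℝ) - β ^ r ≠ 0 := one_sub_pow_ne ⟨hβ0, hβ1⟩ hr
  have hGt : ∀ j : Fin r, ∑' t : ℕ, β ^ t * ((q (j + (t : Fin r)) : ℤ) : ℝ)
      = Qp q j β / (1 - β ^ r) := by
    intro j
    have := tsum_periodic hr (fun i => ((q i : ℤ) : ℝ)) ⟨hβ0, hβ1⟩ j
    simpa [Qp] using this
  have hSk_ge : ∀ k0, T ≤ k0 → (∑' t : ℕ, β ^ t * ((pp r T q c (k0 + t) : ℤ) : ℝ))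
      = Qp q ((k0 - T : ℕ) : Fin r) β / (1 - β ^ r) := by
    intro k0 hk0
    rw [← hGt _]
    refine tsum_congr fun t => ?_
    rw [pp, if_neg (by omega)]
    congr 2
    have h : (k0 + t - T) = (k0 - T) + t := by omega
    rw [h, Nat.cast_add]
  have hSk_lt : ∀ k0, k0 < T → (∑' t : ℕ, β ^ t * ((pp r T q c (k0 + t) : ℤ) : ℝ))
      = (c : ℝ) * Egs (T - k0) β + β ^ (T - k0) * (Qp q 0 β / (1 - β ^ r)) := by
    intro k0 hk0
    have hs := summable_pp r T q c hβ0.le hβ1 k0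
    rw [← Summable.sum_add_tsum_nat_add (T - k0) hs]
    congr 1
    · rw [Egs, Finset.mul_sum]
      refine Finset.sum_congr rfl fun t ht => ?_
      rw [Finset.mem_range] at ht
      rw [pp, if_pos (by omega)]
      ring
    · have ht : ∀ t : ℕ, β ^ (t + (T - k0)) * ((pp r T q c (k0 + (t + (T - k0))) : ℤ) : ℝ)
          = β ^ (T - k0) * (β ^ t * ((q ((0 : Fin r) + (t : Fin r)) : ℤ) : ℝ)) := by
        intro t
        have h1 : k0 + (t + (T - k0)) = T + t := by omega
        rw [h1, pp, if_neg (by omega)]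
        have h2 : (T + t - T) = t := by omega
        rw [h2, pow_add, zero_add]
        ring
      rw [tsum_congr ht, tsum_mul_left, hGt 0]
  have hS : ∑' t : ℕ, β ^ t * ((pp r T q c t : ℤ) : ℝ)
      = (c : ℝ) * Egs T β + β ^ T * (Qp q 0 β / (1 - β ^ r)) := by
    have := hSk_lt 0 hT1
    simpa using this
  by_cases hk : k < T
  · rw [hS, hSk_lt k hk]
    rw [if_pos hk] at hg
    have h' : 0 < (c : ℝ) * Egs (T - k) β + β ^ (T - k) * (Qp q 0 β / (1 - β ^ r))
        - β * ((c : ℝ) * Egs T β + β ^ T * (Qp q 0 β / (1 - β ^ r))) - (d : ℝ) :=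
      hΦA ⟨k, hk⟩
    linarith
  · push_neg at hk
    rw [hS, hSk_ge k hk]
    rw [if_neg (by omega)] at hg
    have h' := hΦB ((k - T : ℕ) : Fin r)
    linarith


theorem folk_positive {A1 A2 : Type*} [Fintype A1] [Fintype A2] [Nonempty A1] [Nonempty A2]
    (p1 p2 : A1 × A2 → ℤ) (r : ℕ) (hr : 0 < r) (γ : Fin r → A1 × A2) (a : A1 × A2)
    (h1 : (d1 p1 a : ℝ) < (1 / r) * ∑ j : Fin r, (p1 (γ j) : ℝ))
    (h2 : (d2 p2 a : ℝ) < (1 / r) * ∑ j : Fin r, (p2 (γ j) : ℝ)) :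
    ∃ (T : ℕ) (β₀ : ℝ), β₀ ∈ Set.Ioo (0 : ℝ) 1 ∧
      ∀ β ∈ Set.Ioo β₀ 1,
        IsStable β p1 p2
          (fun t => if t < T then a else γ ⟨(t - T) % r, Nat.mod_lt _ hr⟩) := by
  haveI : NeZero r := ⟨hr.ne'⟩
  haveI : Nonempty (Fin r) := ⟨⟨0, hr⟩⟩
  have hrR : (0:ℝ) < r := by exact_mod_cast hr
  have hidx : ∀ n : ℕ, (⟨n % r, Nat.mod_lt n hr⟩ : Fin r) = (n : Fin r) := fun n =>
    Fin.ext (by simp [Fin.val_natCast])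
  have hv1 : ((d1 p1 a : ℤ) : ℝ) < (∑ j : Fin r, ((p1 (γ j) : ℤ) : ℝ)) / r := by
    rw [div_eq_inv_mul, ← one_div]; exact h1
  have hv2 : ((d2 p2 a : ℤ) : ℝ) < (∑ j : Fin r, ((p2 (γ j) : ℤ) : ℝ)) / r := by
    rw [div_eq_inv_mul, ← one_div]; exact h2
  have hc1 : ((p1 a : ℤ) : ℝ) ≤ ((d1 p1 a : ℤ) : ℝ) := by
    exact_mod_cast Finset.le_sup' (fun x => p1 (x, a.2)) (Finset.mem_univ a.1)
  have hc2 : ((p2 a : ℤ) : ℝ) ≤ ((d2 p2 a : ℤ) : ℝ) := by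
    exact_mod_cast Finset.le_sup' (fun y => p2 (a.1, y)) (Finset.mem_univ a.2)
  have hgap1 : (0:ℝ) < (∑ j : Fin r, ((p1 (γ j) : ℤ) : ℝ)) / r - (d1 p1 a : ℝ) := by linarith
  have hgap2 : (0:ℝ) < (∑ j : Fin r, ((p2 (γ j) : ℤ) : ℝ)) / r - (d2 p2 a : ℝ) := by linarith
  obtain ⟨T1, hT1⟩ := exists_nat_gt
    ((2 * (∑ m : Fin r, |((p1 (γ m) : ℤ) : ℝ)|)
      + (Finset.univ.sup' Finset.univ_nonempty fun j : Fin r => ((d1 p1 (γ j) : ℤ) : ℝ))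
      - (∑ j : Fin r, ((p1 (γ j) : ℤ) : ℝ)) / r)
      / ((∑ j : Fin r, ((p1 (γ j) : ℤ) : ℝ)) / r - (d1 p1 a : ℝ)))
  obtain ⟨T2, hT2⟩ := exists_nat_gt
    ((2 * (∑ m : Fin r, |((p2 (γ m) : ℤ) : ℝ)|)
      + (Finset.univ.sup' Finset.univ_nonempty fun j : Fin r => ((d2 p2 (γ j) : ℤ) : ℝ))
      - (∑ j : Fin r, ((p2 (γ j) : ℤ) : ℝ)) / r)
      / ((∑ j : Fin r, ((p2 (γ j) : ℤ) : ℝ)) / r - (d2 p2 a : ℝ)))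
  rw [div_lt_iff₀ hgap1] at hT1
  rw [div_lt_iff₀ hgap2] at hT2
  refine ⟨max (max T1 T2) 1, ?_⟩
  set T := max (max T1 T2) 1 with hTdef
  have hTpos : 0 < T := lt_of_lt_of_le Nat.one_pos (le_max_right _ _)
  have hTmono1 : (T1 : ℝ) ≤ (T : ℝ) := by
    exact_mod_cast le_trans (le_max_left T1 T2) (le_max_left _ 1)
  have hTmono2 : (T2 : ℝ) ≤ (T : ℝ) := by
    exact_mod_cast le_trans (le_max_right T1 T2) (le_max_left _ 1)
  have hTcond1 : ∀ j : Fin r, 2 * (∑ m : Fin r, |((p1 (γ m) : ℤ) : ℝ)|) + ((d1 p1 (γ j) : ℤ) : ℝ)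
      < (T : ℝ) * ((∑ j : Fin r, ((p1 (γ j) : ℤ) : ℝ)) / r - (d1 p1 a : ℝ))
        + (∑ j : Fin r, ((p1 (γ j) : ℤ) : ℝ)) / r := by
    intro j
    have hle : ((d1 p1 (γ j) : ℤ) : ℝ)
        ≤ Finset.univ.sup' Finset.univ_nonempty fun j : Fin r => ((d1 p1 (γ j) : ℤ) : ℝ) :=
      Finset.le_sup' (f := fun j : Fin r => ((d1 p1 (γ j) : ℤ) : ℝ)) (Finset.mem_univ j)
    have hmul := mul_le_mul_of_nonneg_right hTmono1 hgap1.le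
    linarith
  have hTcond2 : ∀ j : Fin r, 2 * (∑ m : Fin r, |((p2 (γ m) : ℤ) : ℝ)|) + ((d2 p2 (γ j) : ℤ) : ℝ)
      < (T : ℝ) * ((∑ j : Fin r, ((p2 (γ j) : ℤ) : ℝ)) / r - (d2 p2 a : ℝ))
        + (∑ j : Fin r, ((p2 (γ j) : ℤ) : ℝ)) / r := by
    intro j
    have hle : ((d2 p2 (γ j) : ℤ) : ℝ)
        ≤ Finset.univ.sup' Finset.univ_nonempty fun j : Fin r => ((d2 p2 (γ j) : ℤ) : ℝ) :=
      Finset.le_sup' (f := fun j : Fin r => ((d2 p2 (γ j) : ℤ) : ℝ)) (Finset.mem_univ j)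
    have hmul := mul_le_mul_of_nonneg_right hTmono2 hgap2.le
    linarith
  obtain ⟨β₁, hβ₁, hkey1⟩ := key r hr (fun j => p1 (γ j)) (fun j => d1 p1 (γ j))
    (p1 a) (d1 p1 a) hc1 hv1 T hTpos hTcond1
  obtain ⟨β₂, hβ₂, hkey2⟩ := key r hr (fun j => p2 (γ j)) (fun j => d2 p2 (γ j))
    (p2 a) (d2 p2 a) hc2 hv2 T hTpos hTcond2
  refine ⟨max β₁ β₂, ⟨lt_max_of_lt_left hβ₁.1, max_lt hβ₁.2 hβ₂.2⟩, ?_⟩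
  intro β hβ
  have hβI1 : β ∈ Set.Ioo β₁ 1 := ⟨(le_max_left _ _).trans_lt hβ.1, hβ.2⟩
  have hβI2 : β ∈ Set.Ioo β₂ 1 := ⟨(le_max_right _ _).trans_lt hβ.1, hβ.2⟩
  have hβ0 : 0 < β := lt_trans hβ₁.1 hβI1.1
  have hβ1' : β < 1 := hβ.2
  constructor
  · intro k x
    simp only []
    have hpp : ∀ t, ((p1 (if t < T then a else γ ⟨(t - T) % r, Nat.mod_lt _ hr⟩) : ℤ) : ℝ)
        = ((pp r T (fun j => p1 (γ j)) (p1 a) t : ℤ) : ℝ) := by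
      intro t
      rw [pp]
      by_cases h : t < T
      · rw [if_pos h, if_pos h]
      · rw [if_neg h, if_neg h, hidx (t - T)]
    simp only [hpp]
    have hdev : ((p1 (x, (if k < T then a else γ ⟨(k - T) % r, Nat.mod_lt _ hr⟩).2) : ℤ) : ℝ)
        ≤ if k < T then ((d1 p1 a : ℤ) : ℝ)
          else (((fun j => d1 p1 (γ j)) ((k - T : ℕ) : Fin r) : ℤ) : ℝ) := by
      by_cases hk : k < T
      · rw [if_pos hk, if_pos hk]
        exact_mod_cast Finset.le_sup' (fun y => p1 (y, a.2)) (Finset.mem_univ x)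
      · rw [if_neg hk, if_neg hk, hidx (k - T)]
        exact_mod_cast Finset.le_sup'
          (fun y => p1 (y, (γ ((k - T : ℕ) : Fin r)).2)) (Finset.mem_univ x)
    have hkey := hkey1 β hβI1 k (p1 (x, (if k < T then a else γ ⟨(k - T) % r, Nat.mod_lt _ hr⟩).2)) hdev
    have hsumm : Summable fun t => β ^ t * ((pp r T (fun j => p1 (γ j)) (p1 a) t : ℤ) : ℝ) := by
      have := summable_pp r T (fun j => p1 (γ j)) (p1 a) hβ0.le hβ1' 0
      simpa using this
    have hsplit : (∑ t ∈ Finset.range k, β ^ t * ((pp r T (fun j => p1 (γ j)) (p1 a) t : ℤ) : ℝ))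
        + β ^ k * (∑' t : ℕ, β ^ t * ((pp r T (fun j => p1 (γ j)) (p1 a) (k + t) : ℤ) : ℝ))
        = ∑' t : ℕ, β ^ t * ((pp r T (fun j => p1 (γ j)) (p1 a) t : ℤ) : ℝ) := by
      rw [← Summable.sum_add_tsum_nat_add k hsumm]
      congr 1
      rw [← tsum_mul_left]
      exact tsum_congr fun t => by rw [add_comm t k, pow_add]; ring
    rw [pow_succ]
    linarith [mul_le_mul_of_nonneg_left hkey (pow_nonneg hβ0.le k), hsplit]
  · intro k y
    simp only []
    have hpp : ∀ t, ((p2 (if t < T then a else γ ⟨(t - T) % r, Nat.mod_lt _ hr⟩) : ℤ) : ℝ)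
        = ((pp r T (fun j => p2 (γ j)) (p2 a) t : ℤ) : ℝ) := by
      intro t
      rw [pp]
      by_cases h : t < T
      · rw [if_pos h, if_pos h]
      · rw [if_neg h, if_neg h, hidx (t - T)]
    simp only [hpp]
    have hdev : ((p2 ((if k < T then a else γ ⟨(k - T) % r, Nat.mod_lt _ hr⟩).1, y) : ℤ) : ℝ)
        ≤ if k < T then ((d2 p2 a : ℤ) : ℝ)
          else (((fun j => d2 p2 (γ j)) ((k - T : ℕ) : Fin r) : ℤ) : ℝ) := by
      by_cases hk : k < T
      · rw [if_pos hk, if_pos hk]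
        exact_mod_cast Finset.le_sup' (fun z => p2 (a.1, z)) (Finset.mem_univ y)
      · rw [if_neg hk, if_neg hk, hidx (k - T)]
        exact_mod_cast Finset.le_sup'
          (fun z => p2 ((γ ((k - T : ℕ) : Fin r)).1, z)) (Finset.mem_univ y)
    have hkey := hkey2 β hβI2 k (p2 ((if k < T then a else γ ⟨(k - T) % r, Nat.mod_lt _ hr⟩).1, y)) hdev
    have hsumm : Summable fun t => β ^ t * ((pp r T (fun j => p2 (γ j)) (p2 a) t : ℤ) : ℝ) := by
      have := summable_pp r T (fun j => p2 (γ j)) (p2 a) hβ0.le hβ1' 0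
      simpa using this
    have hsplit : (∑ t ∈ Finset.range k, β ^ t * ((pp r T (fun j => p2 (γ j)) (p2 a) t : ℤ) : ℝ))
        + β ^ k * (∑' t : ℕ, β ^ t * ((pp r T (fun j => p2 (γ j)) (p2 a) (k + t) : ℤ) : ℝ))
        = ∑' t : ℕ, β ^ t * ((pp r T (fun j => p2 (γ j)) (p2 a) t : ℤ) : ℝ) := by
      rw [← Summable.sum_add_tsum_nat_add k hsumm]
      congr 1
      rw [← tsum_mul_left]
      exact tsum_congr fun t => by rw [add_comm t k, pow_add]; ring
    rw [pow_succ]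
    linarith [mul_le_mul_of_nonneg_left hkey (pow_nonneg hβ0.le k), hsplit]

end Stmt1
end

section
/- Let Γ = (p^(1), p^(2), A) be a two-player game and γ ∈ A^r a goal sequence. If for every action pair a ∈ A we have d_a^(1) > v_γ^(1) or d_a^(2) > v_γ^(2), then for every discount factor β ∈ (0,1), no stable sequence has γ as its goal sequence (i.e., no stable sequence ends by repeating γ forever after a finite prefix). -/
/-!
Statement 2: if every action pair has some player's deviation payoff strictly above
that player's goal value of `γ`, then for every discount factor `β ∈ (0,1)` no
stable sequence has `γ` as its goal sequence (ends by cyclically repeating `γ`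
forever after a finite prefix).
-/

namespace Stmt2

def IsStable {A1 A2 : Type*} (β : ℝ) (p1 p2 : A1 × A2 → ℤ) (σ : ℕ → A1 × A2) : Prop :=
  (∀ (k : ℕ) (a : A1),
      (∑ t ∈ Finset.range k, β ^ t * (p1 (σ t) : ℝ)) + β ^ k * (p1 (a, (σ k).2) : ℝ) +
          β ^ (k + 1) * ∑' t : ℕ, β ^ t * (p1 (σ t) : ℝ) ≤
        ∑' t : ℕ, β ^ t * (p1 (σ t) : ℝ)) ∧
  (∀ (k : ℕ) (b : A2),
      (∑ t ∈ Finset.range k, β ^ t * (p2 (σ t) : ℝ)) + β ^ k * (p2 ((σ k).1, b) : ℝ) +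
          β ^ (k + 1) * ∑' t : ℕ, β ^ t * (p2 (σ t) : ℝ) ≤
        ∑' t : ℕ, β ^ t * (p2 (σ t) : ℝ))

def d1 {A1 A2 : Type*} [Fintype A1] [Nonempty A1] (p1 : A1 × A2 → ℤ) (a : A1 × A2) : ℤ :=
  Finset.univ.sup' Finset.univ_nonempty fun x => p1 (x, a.2)

def d2 {A1 A2 : Type*} [Fintype A2] [Nonempty A2] (p2 : A1 × A2 → ℤ) (a : A1 × A2) : ℤ :=
  Finset.univ.sup' Finset.univ_nonempty fun y => p2 (a.1, y)

/-- Core one-player argument. `c t` is the stage payoff of a fixed player along the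
sequence, `dv t` the deviation payoff of that player at stage `t`, `v` the goal value.
If the tail of `c` is `r`-periodic with per-period average `v`, every deviation payoff
is strictly above `v`, and the single-deviation stability inequalities hold, we get a
contradiction. -/
private lemma core (β : ℝ) (hβ0 : 0 < β) (hβ1 : β < 1) (c dv : ℕ → ℝ) (M : ℝ)
    (hM : ∀ t, |c t| ≤ M)
    (r T : ℕ) (hr : 0 < r) (v : ℝ)
    (hper : ∀ t, T ≤ t → c (t + r) = c t)
    (hsum : ∑ k ∈ Finset.range r, c (T + k) = r * v)
    (hdv : ∀ k, v < dv k)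
    (hstab : ∀ k, (∑ t ∈ Finset.range k, β ^ t * c t) + β ^ k * dv k
        + β ^ (k + 1) * ∑' t : ℕ, β ^ t * c t ≤ ∑' t : ℕ, β ^ t * c t) :
    False := by
  have hβ0' : (0:ℝ) ≤ β := hβ0.le
  have hsummable : ∀ m : ℕ, Summable (fun t : ℕ => β ^ t * c (m + t)) := by
    intro m
    apply Summable.of_norm
    have hg : Summable (fun t : ℕ => β ^ t * M) :=
      (summable_geometric_of_lt_one hβ0' hβ1).mul_right M
    apply hg.of_nonneg_of_le (fun t => norm_nonneg _)
    intro t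
    rw [norm_mul, norm_pow, Real.norm_eq_abs, Real.norm_eq_abs, abs_of_pos hβ0]
    exact mul_le_mul_of_nonneg_left (hM _) (pow_nonneg hβ0' t)
  have h0 : Summable (fun t : ℕ => β ^ t * c t) := by simpa using hsummable 0
  set S : ℝ := ∑' t : ℕ, β ^ t * c t with hS
  set V : ℕ → ℝ := fun m => ∑' t : ℕ, β ^ t * c (m + t) with hVdef
  have hV0 : V 0 = S := tsum_congr fun t => by rw [zero_add]
  have hVsplit : ∀ n : ℕ, S = (∑ t ∈ Finset.range n, β ^ t * c t) + β ^ n * V n := by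
    intro n
    have h := Summable.sum_add_tsum_nat_add n h0
    rw [hS, ← h]
    congr 1
    simp only [hVdef]
    rw [← tsum_mul_left]
    exact tsum_congr fun t => by rw [add_comm t n, pow_add]; ring
  have hVrec : ∀ m : ℕ, V m = c m + β * V (m + 1) := by
    intro m
    simp only [hVdef]
    rw [Summable.tsum_eq_zero_add (hsummable m)]
    simp only [pow_zero, one_mul, add_zero]
    congr 1
    rw [← tsum_mul_left]
    exact tsum_congr fun t => by
      rw [show m + (t + 1) = m + 1 + t by omega, pow_succ]; ring
  have hVper : ∀ m, T ≤ m → V (m + r) = V m := by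
    intro m hm
    exact tsum_congr fun t => by
      rw [show m + r + t = m + t + r by omega, hper (m + t) (hm.trans (Nat.le_add_right m t))]
  have hkey : ∀ k, dv k + β * S ≤ c k + β * V (k + 1) := by
    intro k
    have h2 := hVsplit (k + 1)
    rw [Finset.sum_range_succ] at h2
    have h3 : β ^ k * dv k + β ^ (k + 1) * S ≤ β ^ k * c k + β ^ (k + 1) * V (k + 1) := by
      have h1 := hstab k
      linarith
    have e1 : β ^ k * dv k + β ^ (k + 1) * S = β ^ k * (dv k + β * S) := by ring
    have e2 : β ^ k * c k + β ^ (k + 1) * V (k + 1) = β ^ k * (c k + β * V (k + 1)) := by ring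
    rw [e1, e2] at h3
    exact le_of_mul_le_mul_left h3 (pow_pos hβ0 k)
  -- lower bound on S from stability at time 0
  have hS_lb : v < (1 - β) * S := by
    have h := hkey 0
    have h1 : c 0 + β * V 1 = S := by
      rw [← hV0]; exact (hVrec 0).symm
    have h2 := hdv 0
    have e : (1 - β) * S = S - β * S := by ring
    linarith
  -- sum of tail values over one period
  set Sig0 : ℝ := ∑ k ∈ Finset.range r, V (T + k) with hSig0
  have hSigshift : ∑ k ∈ Finset.range r, V (T + k + 1) = Sig0 := by
    have h1 := Finset.sum_range_succ (fun k => V (T + k)) r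
    have h2 := Finset.sum_range_succ' (fun k => V (T + k)) r
    have h3 : V (T + r) = V T := hVper T le_rfl
    simp only [← add_assoc, add_zero] at h1 h2
    rw [hSig0]
    linarith
  have hSigval : (1 - β) * Sig0 = r * v := by
    have h1 : Sig0 = ∑ k ∈ Finset.range r, (c (T + k) + β * V (T + k + 1)) := by
      rw [hSig0]
      exact Finset.sum_congr rfl fun k _ => hVrec (T + k)
    rw [Finset.sum_add_distrib, ← Finset.mul_sum, hSigshift, hsum] at h1
    have e : (1 - β) * Sig0 = Sig0 - β * Sig0 := by ring
    linarith
  -- summed stability inequality over one period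
  have hsum_ineq : ∑ k ∈ Finset.range r, (dv (T + k) + β * S)
      ≤ ∑ k ∈ Finset.range r, (c (T + k) + β * V (T + k + 1)) :=
    Finset.sum_le_sum fun k _ => hkey (T + k)
  rw [Finset.sum_add_distrib, Finset.sum_add_distrib, Finset.sum_const, Finset.card_range,
    ← Finset.mul_sum, hSigshift, hsum, nsmul_eq_mul] at hsum_ineq
  have hdvsum : (r : ℝ) * v < ∑ k ∈ Finset.range r, dv (T + k) := by
    have h : ∑ _k ∈ Finset.range r, v < ∑ k ∈ Finset.range r, dv (T + k) :=
      Finset.sum_lt_sum_of_nonempty (Finset.nonempty_range_iff.mpr hr.ne')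
        (fun k _ => hdv (T + k))
    simpa [Finset.sum_const, Finset.card_range, nsmul_eq_mul] using h
  -- combine everything
  have h5 : (r : ℝ) * (β * S) < β * Sig0 := by linarith
  have h6 : (r : ℝ) * S < Sig0 := by
    have e : (r : ℝ) * (β * S) = β * ((r : ℝ) * S) := by ring
    rw [e] at h5
    exact lt_of_mul_lt_mul_left h5 hβ0'
  have h7 : (1 - β) * ((r : ℝ) * S) < (1 - β) * Sig0 :=
    mul_lt_mul_of_pos_left h6 (by linarith)
  have h8 : (r : ℝ) * v < (r : ℝ) * ((1 - β) * S) :=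
    mul_lt_mul_of_pos_left hS_lb (by exact_mod_cast hr)
  have e2 : (1 - β) * ((r : ℝ) * S) = (r : ℝ) * ((1 - β) * S) := by ring
  linarith

theorem folk_negative {A1 A2 : Type*} [Fintype A1] [Fintype A2] [Nonempty A1] [Nonempty A2]
    (p1 p2 : A1 × A2 → ℤ) (r : ℕ) (hr : 0 < r) (γ : Fin r → A1 × A2)
    (hdev : ∀ a : A1 × A2,
      (d1 p1 a : ℝ) > (1 / r) * ∑ j : Fin r, (p1 (γ j) : ℝ) ∨
      (d2 p2 a : ℝ) > (1 / r) * ∑ j : Fin r, (p2 (γ j) : ℝ)) :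
    ∀ β ∈ Set.Ioo (0 : ℝ) 1, ∀ σ : ℕ → A1 × A2,
      (∃ T : ℕ, ∀ t : ℕ, T ≤ t → σ t = γ ⟨(t - T) % r, Nat.mod_lt _ hr⟩) →
      ¬ IsStable β p1 p2 σ := by
  rintro β ⟨hβ0, hβ1⟩ σ ⟨T, hT⟩ ⟨hst1, hst2⟩
  -- the hypothesis decouples: one of the players has deviation payoff above goal
  -- value at *every* action pair
  have hsplit : (∀ a : A1 × A2, (1 / (r:ℝ)) * ∑ j : Fin r, (p1 (γ j) : ℝ) < (d1 p1 a : ℝ)) ∨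
      (∀ a : A1 × A2, (1 / (r:ℝ)) * ∑ j : Fin r, (p2 (γ j) : ℝ) < (d2 p2 a : ℝ)) := by
    by_contra h
    push_neg at h
    obtain ⟨⟨a, ha⟩, ⟨b, hb⟩⟩ := h
    rcases hdev (b.1, a.2) with h | h
    · have e : d1 p1 (b.1, a.2) = d1 p1 a := rfl
      rw [e] at h
      exact absurd h (not_lt.mpr ha)
    · have e : d2 p2 (b.1, a.2) = d2 p2 b := rfl
      rw [e] at h
      exact absurd h (not_lt.mpr hb)
  rcases hsplit with h1 | h2
  · -- player 1 case
    refine core β hβ0 hβ1 (fun t => ((p1 (σ t) : ℤ) : ℝ)) (fun t => ((d1 p1 (σ t) : ℤ) : ℝ))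
      ((Finset.univ : Finset (A1 × A2)).sup' Finset.univ_nonempty fun a => |((p1 a : ℤ) : ℝ)|)
      (by intro t; exact Finset.le_sup' (fun a => |((p1 a : ℤ) : ℝ)|) (Finset.mem_univ (σ t))) r T hr
      ((1 / (r:ℝ)) * ∑ j : Fin r, (p1 (γ j) : ℝ)) ?_ ?_ (fun k => h1 (σ k)) ?_
    · intro t ht
      show ((p1 (σ (t + r)) : ℤ) : ℝ) = ((p1 (σ t) : ℤ) : ℝ)
      rw [hT (t + r) (by omega), hT t ht]
      rw [show (⟨(t + r - T) % r, Nat.mod_lt _ hr⟩ : Fin r) = ⟨(t - T) % r, Nat.mod_lt _ hr⟩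
        from Fin.ext (by
          show (t + r - T) % r = (t - T) % r
          rw [show t + r - T = (t - T) + r by omega, Nat.add_mod_right])]
    · have h1' : ∑ k ∈ Finset.range r, ((p1 (σ (T + k)) : ℤ) : ℝ)
          = ∑ j : Fin r, ((p1 (γ j) : ℤ) : ℝ) := by
        rw [← Fin.sum_univ_eq_sum_range (fun k => ((p1 (σ (T + k)) : ℤ) : ℝ)) r]
        refine Finset.sum_congr rfl fun j _ => ?_
        rw [hT (T + (j : ℕ)) (Nat.le_add_right _ _)]
        congr 2
        refine congrArg γ (Fin.ext ?_)
        show (T + (j : ℕ) - T) % r = (j : ℕ)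
        rw [show T + (j : ℕ) - T = (j : ℕ) by omega, Nat.mod_eq_of_lt j.isLt]
      rw [h1']
      have hrne : ((r : ℕ) : ℝ) ≠ 0 := Nat.cast_ne_zero.mpr hr.ne'
      field_simp
    · intro k
      obtain ⟨x, -, hx⟩ := Finset.exists_mem_eq_sup'
        (Finset.univ_nonempty (α := A1)) (fun x => p1 (x, (σ k).2))
      have hx' : d1 p1 (σ k) = p1 (x, (σ k).2) := hx
      have hd : ((d1 p1 (σ k) : ℤ) : ℝ) = ((p1 (x, (σ k).2) : ℤ) : ℝ) := by rw [hx']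
      simp only [hd]
      exact hst1 k x
  · -- player 2 case
    refine core β hβ0 hβ1 (fun t => ((p2 (σ t) : ℤ) : ℝ)) (fun t => ((d2 p2 (σ t) : ℤ) : ℝ))
      ((Finset.univ : Finset (A1 × A2)).sup' Finset.univ_nonempty fun a => |((p2 a : ℤ) : ℝ)|)
      (by intro t; exact Finset.le_sup' (fun a => |((p2 a : ℤ) : ℝ)|) (Finset.mem_univ (σ t))) r T hr
      ((1 / (r:ℝ)) * ∑ j : Fin r, (p2 (γ j) : ℝ)) ?_ ?_ (fun k => h2 (σ k)) ?_
    · intro t ht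
      show ((p2 (σ (t + r)) : ℤ) : ℝ) = ((p2 (σ t) : ℤ) : ℝ)
      rw [hT (t + r) (by omega), hT t ht]
      rw [show (⟨(t + r - T) % r, Nat.mod_lt _ hr⟩ : Fin r) = ⟨(t - T) % r, Nat.mod_lt _ hr⟩
        from Fin.ext (by
          show (t + r - T) % r = (t - T) % r
          rw [show t + r - T = (t - T) + r by omega, Nat.add_mod_right])]
    · have h1' : ∑ k ∈ Finset.range r, ((p2 (σ (T + k)) : ℤ) : ℝ)
          = ∑ j : Fin r, ((p2 (γ j) : ℤ) : ℝ) := by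
        rw [← Fin.sum_univ_eq_sum_range (fun k => ((p2 (σ (T + k)) : ℤ) : ℝ)) r]
        refine Finset.sum_congr rfl fun j _ => ?_
        rw [hT (T + (j : ℕ)) (Nat.le_add_right _ _)]
        congr 2
        refine congrArg γ (Fin.ext ?_)
        show (T + (j : ℕ) - T) % r = (j : ℕ)
        rw [show T + (j : ℕ) - T = (j : ℕ) by omega, Nat.mod_eq_of_lt j.isLt]
      rw [h1']
      have hrne : ((r : ℕ) : ℝ) ≠ 0 := Nat.cast_ne_zero.mpr hr.ne'
      field_simp
    · intro k
      obtain ⟨y, -, hy⟩ := Finset.exists_mem_eq_sup'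
        (Finset.univ_nonempty (α := A2)) (fun y => p2 ((σ k).1, y))
      have hy' : d2 p2 (σ k) = p2 ((σ k).1, y) := hy
      have hd : ((d2 p2 (σ k) : ℤ) : ℝ) = ((p2 ((σ k).1, y) : ℤ) : ℝ) := by rw [hy']
      simp only [hd]
      exact hst2 k y


end Stmt2
end

section
/- Let σ be a minimum-total-hazing stable sequence (in the β → 1 limit) with goal sequence γ. If there exist timesteps k₁ < k₂ in the hazing period with equal total-hazing pairs (H_{k₁}^(1), H_{k₁}^(2)) = (H_{k₂}^(1), H_{k₂}^(2)), then the modified sequence obtained by deleting the actions at timesteps k₁ < t ≤ k₂ is also stable with goal sequence γ and has the same total hazing at the end of its (shorter) hazing period. -/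
/-!
Statement 6: if a minimum-total-hazing stable sequence (in the β → 1 limit sense)
with goal sequence `γ` has two timesteps `k₁ < k₂` in its hazing period with equal
total-hazing pairs, then the sequence obtained by deleting the actions at timesteps
`k₁ < t ≤ k₂` is also stable with goal sequence `γ` and has the same total hazing
at the end of its (shorter) hazing period.
-/

namespace Stmt6

def d1 {A1 A2 : Type*} [Fintype A1] [Nonempty A1] (p1 : A1 × A2 → ℤ) (a : A1 × A2) : ℤ :=
  Finset.univ.sup' Finset.univ_nonempty fun x => p1 (x, a.2)

def d2 {A1 A2 : Type*} [Fintype A2] [Nonempty A2] (p2 : A1 × A2 → ℤ) (a : A1 × A2) : ℤ :=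
  Finset.univ.sup' Finset.univ_nonempty fun y => p2 (a.1, y)

/-- Goal value of player 1. -/
noncomputable def v1 {A1 A2 : Type*} (p1 : A1 × A2 → ℤ) {r : ℕ} (γ : Fin r → A1 × A2) : ℝ :=
  (1 / r) * ∑ j : Fin r, (p1 (γ j) : ℝ)

noncomputable def v2 {A1 A2 : Type*} (p2 : A1 × A2 → ℤ) {r : ℕ} (γ : Fin r → A1 × A2) : ℝ :=
  (1 / r) * ∑ j : Fin r, (p2 (γ j) : ℝ)

/-- Stability in the β → 1 limit: `H_{k-1}^{(i)} > t_{σ_k}^{(i)}` for all `k`, `i`. -/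
noncomputable def LimitStable {A1 A2 : Type*} [Fintype A1] [Fintype A2] [Nonempty A1]
    [Nonempty A2] (p1 p2 : A1 × A2 → ℤ) {r : ℕ} (γ : Fin r → A1 × A2)
    (σ : ℕ → A1 × A2) : Prop :=
  ∀ k : ℕ,
    (∑ t ∈ Finset.range k, (v1 p1 γ - (p1 (σ t) : ℝ)) > (d1 p1 (σ k) : ℝ) - v1 p1 γ) ∧
    (∑ t ∈ Finset.range k, (v2 p2 γ - (p2 (σ t) : ℝ)) > (d2 p2 (σ k) : ℝ) - v2 p2 γ)

lemma sum_shift (f : ℕ → ℝ) (k₁ k₂ : ℕ) (hk : k₁ < k₂)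
    (heq : ∑ t ∈ Finset.range (k₁ + 1), f t = ∑ t ∈ Finset.range (k₂ + 1), f t) :
    ∀ k, k₁ < k →
      ∑ t ∈ Finset.range k, (if t ≤ k₁ then f t else f (t + (k₂ - k₁))) =
        ∑ t ∈ Finset.range (k + (k₂ - k₁)), f t := by
  intro k hk'
  induction k, hk' using Nat.le_induction with
  | base =>
    have h1 : ∑ t ∈ Finset.range (k₁ + 1), (if t ≤ k₁ then f t else f (t + (k₂ - k₁)))
        = ∑ t ∈ Finset.range (k₁ + 1), f t := by
      refine Finset.sum_congr rfl fun t ht => ?_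
      rw [if_pos (by simpa [Nat.lt_succ_iff] using Finset.mem_range.mp ht)]
    have h2 : k₁ + 1 + (k₂ - k₁) = k₂ + 1 := by omega
    rw [h1, heq, h2]
  | succ k hk' ih =>
    have h2 : k + 1 + (k₂ - k₁) = (k + (k₂ - k₁)) + 1 := by omega
    rw [Finset.sum_range_succ, ih, if_neg (by omega), h2, Finset.sum_range_succ]

theorem delete_repeated_hazing_pair {A1 A2 : Type*} [Fintype A1] [Fintype A2]
    [Nonempty A1] [Nonempty A2]
    (p1 p2 : A1 × A2 → ℤ) (r : ℕ) (hr : 0 < r) (γ : Fin r → A1 × A2)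
    (σ : ℕ → A1 × A2) (T : ℕ)
    (htail : ∀ t : ℕ, T ≤ t → σ t = γ ⟨(t - T) % r, Nat.mod_lt _ hr⟩)
    (hstab : LimitStable p1 p2 γ σ)
    -- σ has minimum total hazing among stable sequences with goal sequence γ:
    (hmin : ∀ (σ' : ℕ → A1 × A2) (T' : ℕ),
      (∀ t : ℕ, T' ≤ t → σ' t = γ ⟨(t - T') % r, Nat.mod_lt _ hr⟩) →
      LimitStable p1 p2 γ σ' →
      (∑ t ∈ Finset.range T, ((v1 p1 γ - (p1 (σ t) : ℝ)) + (v2 p2 γ - (p2 (σ t) : ℝ)))) ≤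
        ∑ t ∈ Finset.range T', ((v1 p1 γ - (p1 (σ' t) : ℝ)) + (v2 p2 γ - (p2 (σ' t) : ℝ))))
    (k₁ k₂ : ℕ) (hk : k₁ < k₂) (hk₂ : k₂ < T)
    (heq1 : ∑ t ∈ Finset.range (k₁ + 1), (v1 p1 γ - (p1 (σ t) : ℝ)) =
            ∑ t ∈ Finset.range (k₂ + 1), (v1 p1 γ - (p1 (σ t) : ℝ)))
    (heq2 : ∑ t ∈ Finset.range (k₁ + 1), (v2 p2 γ - (p2 (σ t) : ℝ)) =
            ∑ t ∈ Finset.range (k₂ + 1), (v2 p2 γ - (p2 (σ t) : ℝ))) :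
    LimitStable p1 p2 γ (fun t => if t ≤ k₁ then σ t else σ (t + (k₂ - k₁))) ∧
    (∀ t : ℕ, T - (k₂ - k₁) ≤ t →
      (fun t => if t ≤ k₁ then σ t else σ (t + (k₂ - k₁))) t =
        γ ⟨(t - (T - (k₂ - k₁))) % r, Nat.mod_lt _ hr⟩) ∧
    (∑ t ∈ Finset.range (T - (k₂ - k₁)),
        ((v1 p1 γ - (p1 ((fun t => if t ≤ k₁ then σ t else σ (t + (k₂ - k₁))) t) : ℝ)) +
         (v2 p2 γ - (p2 ((fun t => if t ≤ k₁ then σ t else σ (t + (k₂ - k₁))) t) : ℝ))) =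
      ∑ t ∈ Finset.range T,
        ((v1 p1 γ - (p1 (σ t) : ℝ)) + (v2 p2 γ - (p2 (σ t) : ℝ)))) := by
  set Δ := k₂ - k₁ with hΔ
  set σ' : ℕ → A1 × A2 := fun t => if t ≤ k₁ then σ t else σ (t + Δ) with hσ'
  have hs1 := sum_shift (fun t => v1 p1 γ - (p1 (σ t) : ℝ)) k₁ k₂ hk heq1
  have hs2 := sum_shift (fun t => v2 p2 γ - (p2 (σ t) : ℝ)) k₁ k₂ hk heq2
  have hsum : ∀ k, k₁ < k →
      (∑ t ∈ Finset.range k, (v1 p1 γ - (p1 (σ' t) : ℝ)) =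
        ∑ t ∈ Finset.range (k + Δ), (v1 p1 γ - (p1 (σ t) : ℝ))) ∧
      (∑ t ∈ Finset.range k, (v2 p2 γ - (p2 (σ' t) : ℝ)) =
        ∑ t ∈ Finset.range (k + Δ), (v2 p2 γ - (p2 (σ t) : ℝ))) := by
    intro k hk'
    constructor
    · rw [← hs1 k hk']
      refine Finset.sum_congr rfl fun t _ => ?_
      by_cases h : t ≤ k₁ <;> simp [hσ', h, hΔ]
    · rw [← hs2 k hk']
      refine Finset.sum_congr rfl fun t _ => ?_
      by_cases h : t ≤ k₁ <;> simp [hσ', h, hΔ]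
  have hstab' : LimitStable p1 p2 γ σ' := by
    intro k
    by_cases h : k ≤ k₁
    · have he : ∀ t ∈ Finset.range k, σ' t = σ t := by
        intro t ht
        have : t ≤ k₁ := by have := Finset.mem_range.mp ht; omega
        simp [hσ', this]
      have h1 : ∑ t ∈ Finset.range k, (v1 p1 γ - (p1 (σ' t) : ℝ)) =
          ∑ t ∈ Finset.range k, (v1 p1 γ - (p1 (σ t) : ℝ)) :=
        Finset.sum_congr rfl fun t ht => by rw [he t ht]
      have h2 : ∑ t ∈ Finset.range k, (v2 p2 γ - (p2 (σ' t) : ℝ)) =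
          ∑ t ∈ Finset.range k, (v2 p2 γ - (p2 (σ t) : ℝ)) :=
        Finset.sum_congr rfl fun t ht => by rw [he t ht]
      have hk' : σ' k = σ k := by simp [hσ', h]
      rw [h1, h2, hk']
      exact hstab k
    · have hk' : k₁ < k := by omega
      obtain ⟨h1, h2⟩ := hsum k hk'
      have hkk : σ' k = σ (k + Δ) := by simp [hσ', h]
      rw [h1, h2, hkk]
      exact hstab (k + Δ)
  have hTΔ : k₁ < T - Δ := by omega
  refine ⟨hstab', ?_, ?_⟩
  · intro t ht
    have h1 : ¬ t ≤ k₁ := by omega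
    have h2 : T ≤ t + Δ := by omega
    have h3 : t + Δ - T = t - (T - Δ) := by omega
    have hb : σ' t = σ (t + Δ) := by simp [hσ', h1]
    rw [hb, htail (t + Δ) h2]
    congr 1
    simp [h3]
  · obtain ⟨h1, h2⟩ := hsum (T - Δ) hTΔ
    have hT : T - Δ + Δ = T := by omega
    rw [hT] at h1 h2
    simp only [Finset.sum_add_distrib] at *
    rw [h1, h2]

end Stmt6
end

section
/- Consequently, every 2×2 symmetric two-player game admits a stable sequence in the repeated game with restarts, for every discount factor β ∈ (0,1). -/
/-!
Statement 9: every 2×2 symmetric two-player game admits a stable sequence in the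
repeated game with restarts, for every discount factor `β ∈ (0,1)`.
-/

namespace Stmt9

def IsStable {A1 A2 : Type*} (β : ℝ) (p1 p2 : A1 × A2 → ℤ) (σ : ℕ → A1 × A2) : Prop :=
  (∀ (k : ℕ) (a : A1),
      (∑ t ∈ Finset.range k, β ^ t * (p1 (σ t) : ℝ)) + β ^ k * (p1 (a, (σ k).2) : ℝ) +
          β ^ (k + 1) * ∑' t : ℕ, β ^ t * (p1 (σ t) : ℝ) ≤
        ∑' t : ℕ, β ^ t * (p1 (σ t) : ℝ)) ∧
  (∀ (k : ℕ) (b : A2),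
      (∑ t ∈ Finset.range k, β ^ t * (p2 (σ t) : ℝ)) + β ^ k * (p2 ((σ k).1, b) : ℝ) +
          β ^ (k + 1) * ∑' t : ℕ, β ^ t * (p2 (σ t) : ℝ) ≤
        ∑' t : ℕ, β ^ t * (p2 (σ t) : ℝ))

private lemma key (β : ℝ) (hβ0 : 0 < β) (hβ1 : β < 1) (c d : ℝ) (hd : d ≤ c) (k : ℕ) :
    (∑ t ∈ Finset.range k, β ^ t * c) + β ^ k * d + β ^ (k + 1) * ∑' t : ℕ, β ^ t * c ≤
      ∑' t : ℕ, β ^ t * c := by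
  have hne : (1 : ℝ) - β ≠ 0 := by linarith
  have hT : (∑' t : ℕ, β ^ t * c) = (1 - β)⁻¹ * c := by
    rw [tsum_mul_right, tsum_geometric_of_lt_one hβ0.le hβ1]
  have hS : (∑ t ∈ Finset.range k, β ^ t * c) = ((β ^ k - 1) / (β - 1)) * c := by
    rw [← Finset.sum_mul, geom_sum_eq (by linarith)]
  rw [hT, hS]
  have hk : (0 : ℝ) < β ^ k := pow_pos hβ0 k
  have h1 : (0:ℝ) < 1 - β := by linarith
  rw [← sub_nonneg]
  have hβne : β - 1 ≠ 0 := by linarith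
  have : (1 - β)⁻¹ * c - ((β ^ k - 1) / (β - 1) * c + β ^ k * d + β ^ (k + 1) * ((1 - β)⁻¹ * c))
      = β ^ k * (c - d) := by
    field_simp
    ring
  rw [this]
  exact mul_nonneg hk.le (sub_nonneg.2 hd)

theorem symmetric_2x2_has_stable_sequence (p1 p2 : Bool × Bool → ℤ)
    (hsym : ∀ a b : Bool, p2 (a, b) = p1 (b, a)) :
    ∀ β ∈ Set.Ioo (0 : ℝ) 1, ∃ σ : ℕ → Bool × Bool, IsStable β p1 p2 σ := by
  -- first find a pure Nash equilibrium (x, y)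
  obtain ⟨x, y, hx, hy⟩ :
      ∃ x y : Bool, (∀ a : Bool, p1 (a, y) ≤ p1 (x, y)) ∧ (∀ b : Bool, p1 (b, x) ≤ p1 (y, x)) := by
    by_cases h00 : p1 (true, false) ≤ p1 (false, false)
    · exact ⟨false, false, fun a => by cases a <;> simpa, fun b => by cases b <;> simpa⟩
    by_cases h11 : p1 (false, true) ≤ p1 (true, true)
    · exact ⟨true, true, fun a => by cases a <;> simpa, fun b => by cases b <;> simpa⟩
    push_neg at h00 h11
    exact ⟨false, true, fun a => by cases a <;> simp [le_of_lt h11],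
      fun b => by cases b <;> simp [le_of_lt h00]⟩
  rintro β ⟨hβ0, hβ1⟩
  refine ⟨fun _ => (x, y), ?_, ?_⟩
  · intro k a
    exact key β hβ0 hβ1 _ _ (by exact_mod_cast hx a) k
  · intro k b
    have h2 : ∀ u v : Bool, ((p2 (u, v) : ℝ)) = (p1 (v, u) : ℝ) := by
      intro u v; rw [hsym u v]
    simp only [h2]
    exact key β hβ0 hβ1 _ _ (by exact_mod_cast hy b) k

end Stmt9
end

section
/- In Matching Pennies, for every discount factor β ∈ (0,1), there is no stable sequence in the repeated game with restarts. -/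
/-!
Statement 11: in Matching Pennies, for every discount factor `β ∈ (0,1)`, there is
no stable sequence in the repeated game with restarts.
-/

namespace Stmt11

def IsStable {A1 A2 : Type*} (β : ℝ) (p1 p2 : A1 × A2 → ℤ) (σ : ℕ → A1 × A2) : Prop :=
  (∀ (k : ℕ) (a : A1),
      (∑ t ∈ Finset.range k, β ^ t * (p1 (σ t) : ℝ)) + β ^ k * (p1 (a, (σ k).2) : ℝ) +
          β ^ (k + 1) * ∑' t : ℕ, β ^ t * (p1 (σ t) : ℝ) ≤
        ∑' t : ℕ, β ^ t * (p1 (σ t) : ℝ)) ∧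
  (∀ (k : ℕ) (b : A2),
      (∑ t ∈ Finset.range k, β ^ t * (p2 (σ t) : ℝ)) + β ^ k * (p2 ((σ k).1, b) : ℝ) +
          β ^ (k + 1) * ∑' t : ℕ, β ^ t * (p2 (σ t) : ℝ) ≤
        ∑' t : ℕ, β ^ t * (p2 (σ t) : ℝ))

/-- Row player's payoff in Matching Pennies: 1 if the actions differ, 0 otherwise. -/
def mp1 : Bool × Bool → ℤ := fun c => if c.1 = c.2 then 0 else 1

/-- Column player's payoff in Matching Pennies: 1 if the actions match, 0 otherwise. -/
def mp2 : Bool × Bool → ℤ := fun c => if c.1 = c.2 then 1 else 0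

theorem matching_pennies_no_stable_sequence :
    ∀ β ∈ Set.Ioo (0 : ℝ) 1, ¬ ∃ σ : ℕ → Bool × Bool, IsStable β mp1 mp2 σ := by
  rintro β ⟨hβ0, hβ1⟩ ⟨σ, h1, h2⟩
  have hp1 : ∀ t, (0:ℝ) ≤ (mp1 (σ t) : ℝ) ∧ (mp1 (σ t) : ℝ) ≤ 1 := by
    intro t; unfold mp1; split <;> norm_num
  have hp2 : ∀ t, (0:ℝ) ≤ (mp2 (σ t) : ℝ) ∧ (mp2 (σ t) : ℝ) ≤ 1 := by
    intro t; unfold mp2; split <;> norm_num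
  have hgeo : Summable (fun t : ℕ => β ^ t) :=
    summable_geometric_of_lt_one hβ0.le hβ1
  have hs1 : Summable (fun t => β ^ t * (mp1 (σ t) : ℝ)) := by
    apply Summable.of_nonneg_of_le
      (fun t => mul_nonneg (pow_nonneg hβ0.le t) (hp1 t).1)
      (fun t => ?_) hgeo
    nlinarith [(hp1 t).2, (hp1 t).1, pow_nonneg hβ0.le t]
  have hs2 : Summable (fun t => β ^ t * (mp2 (σ t) : ℝ)) := by
    apply Summable.of_nonneg_of_le
      (fun t => mul_nonneg (pow_nonneg hβ0.le t) (hp2 t).1)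
      (fun t => ?_) hgeo
    nlinarith [(hp2 t).2, (hp2 t).1, pow_nonneg hβ0.le t]
  set V1 := ∑' t : ℕ, β ^ t * (mp1 (σ t) : ℝ) with hV1
  set V2 := ∑' t : ℕ, β ^ t * (mp2 (σ t) : ℝ) with hV2
  have hsum : V1 + V2 = (1 - β)⁻¹ := by
    rw [hV1, hV2, ← Summable.tsum_add hs1 hs2]
    have : ∀ t : ℕ, β ^ t * (mp1 (σ t) : ℝ) + β ^ t * (mp2 (σ t) : ℝ) = β ^ t := by
      intro t
      have : (mp1 (σ t) : ℝ) + (mp2 (σ t) : ℝ) = 1 := by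
        unfold mp1 mp2; split <;> norm_num
      rw [← mul_add, this, mul_one]
    simp_rw [this]
    exact tsum_geometric_of_lt_one hβ0.le hβ1
  have key1 := h1 0 (!(σ 0).2)
  have key2 := h2 0 (σ 0).1
  simp only [Finset.range_zero, Finset.sum_empty, pow_zero, pow_one, one_mul, zero_add] at key1 key2
  have e1 : (mp1 (!(σ 0).2, (σ 0).2) : ℝ) = 1 := by
    unfold mp1; simp
  have e2 : (mp2 ((σ 0).1, (σ 0).1) : ℝ) = 1 := by
    unfold mp2; simp
  rw [e1] at key1
  rw [e2] at key2
  -- key1 : 1 + β * V1 ≤ V1, key2 : 1 + β * V2 ≤ V2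
  have hne : (1 - β) ≠ 0 := by linarith
  have hmul : (1 - β) * (V1 + V2) = 1 := by
    rw [hsum]; field_simp
  nlinarith [key1, key2, hmul]

end Stmt11
end

section
/- In rock-paper-scissors (the symmetric 3×3 game where a player receives payoff 1 if they win the round and 0 otherwise, with rock beating scissors, scissors beating paper, paper beating rock, and ties giving both 0), there is no stable sequence in the repeated game with restarts for any discount factor β ∈ (0,1). -/
/-!
Statement 12: rock-paper-scissors has no stable sequence in the repeated game with
restarts for any discount factor `β ∈ (0,1)`. Actions are `Fin 3` with
`0 = Rock, 1 = Paper, 2 = Scissors`; a player receives payoff 1 iff they win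
(paper beats rock, scissors beats paper, rock beats scissors), else 0.
-/

namespace Stmt12

def IsStable {A1 A2 : Type*} (β : ℝ) (p1 p2 : A1 × A2 → ℤ) (σ : ℕ → A1 × A2) : Prop :=
  (∀ (k : ℕ) (a : A1),
      (∑ t ∈ Finset.range k, β ^ t * (p1 (σ t) : ℝ)) + β ^ k * (p1 (a, (σ k).2) : ℝ) +
          β ^ (k + 1) * ∑' t : ℕ, β ^ t * (p1 (σ t) : ℝ) ≤
        ∑' t : ℕ, β ^ t * (p1 (σ t) : ℝ)) ∧
  (∀ (k : ℕ) (b : A2),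
      (∑ t ∈ Finset.range k, β ^ t * (p2 (σ t) : ℝ)) + β ^ k * (p2 ((σ k).1, b) : ℝ) +
          β ^ (k + 1) * ∑' t : ℕ, β ^ t * (p2 (σ t) : ℝ) ≤
        ∑' t : ℕ, β ^ t * (p2 (σ t) : ℝ))

/-- Player 1's payoff in rock-paper-scissors: 1 iff player 1's action beats
player 2's action (in `Fin 3`, `a` beats `b` iff `a = b + 1`). -/
def rps1 : Fin 3 × Fin 3 → ℤ := fun c => if c.1 = c.2 + 1 then 1 else 0

/-- Player 2's payoff (the symmetric counterpart). -/
def rps2 : Fin 3 × Fin 3 → ℤ := fun c => if c.2 = c.1 + 1 then 1 else 0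

theorem rps_no_stable_sequence :
    ∀ β ∈ Set.Ioo (0 : ℝ) 1, ¬ ∃ σ : ℕ → Fin 3 × Fin 3, IsStable β rps1 rps2 σ := by
  rintro β ⟨hβ0, hβ1⟩ ⟨σ, h1, h2⟩
  have hβ0' : (0:ℝ) ≤ β := le_of_lt hβ0
  have hβ1' : (0:ℝ) < 1 - β := by linarith
  have hsum12 : ∀ c : Fin 3 × Fin 3, rps1 c + rps2 c ≤ 1 := by decide
  have hnn1 : ∀ c, (0:ℤ) ≤ rps1 c := by decide
  have hnn2 : ∀ c, (0:ℤ) ≤ rps2 c := by decide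
  set f1 : ℕ → ℝ := fun t => β ^ t * (rps1 (σ t) : ℝ) with hf1
  set f2 : ℕ → ℝ := fun t => β ^ t * (rps2 (σ t) : ℝ) with hf2
  have hg : Summable (fun t : ℕ => β ^ t) := summable_geometric_of_lt_one hβ0' hβ1
  have hpos1 : ∀ t, 0 ≤ f1 t := fun t =>
    mul_nonneg (pow_nonneg hβ0' t) (by exact_mod_cast hnn1 (σ t))
  have hpos2 : ∀ t, 0 ≤ f2 t := fun t =>
    mul_nonneg (pow_nonneg hβ0' t) (by exact_mod_cast hnn2 (σ t))
  have hb12 : ∀ t, f1 t + f2 t ≤ β ^ t := by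
    intro t
    have h := hsum12 (σ t)
    have h' : ((rps1 (σ t) : ℝ)) + ((rps2 (σ t) : ℝ)) ≤ 1 := by exact_mod_cast h
    have hp := pow_nonneg hβ0' t
    simp only [hf1, hf2]
    nlinarith
  have hS1 : Summable f1 := by
    refine Summable.of_nonneg_of_le hpos1 (fun t => ?_) hg
    have := hb12 t
    have := hpos2 t
    linarith
  have hS2 : Summable f2 := by
    refine Summable.of_nonneg_of_le hpos2 (fun t => ?_) hg
    have := hb12 t
    have := hpos1 t
    linarith
  set U1 := ∑' t : ℕ, f1 t with hU1
  set U2 := ∑' t : ℕ, f2 t with hU2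
  -- Deviation at time 0 for player 1
  have hd1 := h1 0 ((σ 0).2 + 1)
  have hd2 := h2 0 ((σ 0).1 + 1)
  have e1 : rps1 ((σ 0).2 + 1, (σ 0).2) = 1 := by simp [rps1]
  have e2 : rps2 ((σ 0).1, (σ 0).1 + 1) = 1 := by simp [rps2]
  rw [e1] at hd1
  rw [e2] at hd2
  simp only [Finset.range_zero, Finset.sum_empty, pow_zero, zero_add, pow_one,
    Int.cast_one, one_mul] at hd1 hd2
  -- hd1 : 1 + β * U1 ≤ U1, hd2 : 1 + β * U2 ≤ U2
  have hU1b : 1 ≤ (1 - β) * U1 := by nlinarith [hd1]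
  have hU2b : 1 ≤ (1 - β) * U2 := by nlinarith [hd2]
  -- Total utility bound
  have htot : U1 + U2 ≤ (1 - β)⁻¹ := by
    have hadd : U1 + U2 = ∑' t : ℕ, (f1 t + f2 t) := (Summable.tsum_add hS1 hS2).symm
    rw [hadd]
    have hle : ∑' t : ℕ, (f1 t + f2 t) ≤ ∑' t : ℕ, β ^ t :=
      Summable.tsum_le_tsum hb12 (hS1.add hS2) hg
    rw [tsum_geometric_of_lt_one hβ0' hβ1] at hle
    exact hle
  have hmul : (1 - β) * (U1 + U2) ≤ 1 := by
    have := mul_le_mul_of_nonneg_left htot (le_of_lt hβ1')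
    rwa [mul_inv_cancel₀ (ne_of_gt hβ1')] at this
  nlinarith [hU1b, hU2b, hmul]

end Stmt12
end

section
/- Let Γ be a symmetric two-player game with A^(1) = A^(2), p^(2)(a,b) = p^(1)(b,a). Suppose a* = (a*^(1), a*^(2)) ∈ A maximizes p^(1) + p^(2) over A, and there exists a ∈ A with d_a^(1) < (p^(1)(a*) + p^(2)(a*))/2 and d_a^(2) < (p^(1)(a*) + p^(2)(a*))/2. Then the length-2 goal sequence γ = ((a*^(1), a*^(2)), (a*^(2), a*^(1))) satisfies v_γ^(1) = v_γ^(2) = (p^(1)(a*) + p^(2)(a*))/2, and there exist T ∈ ℕ and β₀ < 1 such that for all β ∈ (β₀, 1), the sequence repeating a for T steps and then repeating γ forever is stable. -/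
/-!
Statement 13: in a symmetric game, if `a*` maximizes social welfare and some `a`
has both deviation payoffs strictly below half the maximum social welfare, then the
alternating goal sequence `γ = (a*, swap a*)` has both goal values equal to half
the maximum social welfare, and for some `T` and all sufficiently large `β`,
repeating `a` for `T` steps followed by alternating `a*, swap a*` forever is stable.
-/

namespace Stmt13

def IsStable {A1 A2 : Type*} (β : ℝ) (p1 p2 : A1 × A2 → ℤ) (σ : ℕ → A1 × A2) : Prop :=
  (∀ (k : ℕ) (a : A1),
      (∑ t ∈ Finset.range k, β ^ t * (p1 (σ t) : ℝ)) + β ^ k * (p1 (a, (σ k).2) : ℝ) +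
          β ^ (k + 1) * ∑' t : ℕ, β ^ t * (p1 (σ t) : ℝ) ≤
        ∑' t : ℕ, β ^ t * (p1 (σ t) : ℝ)) ∧
  (∀ (k : ℕ) (b : A2),
      (∑ t ∈ Finset.range k, β ^ t * (p2 (σ t) : ℝ)) + β ^ k * (p2 ((σ k).1, b) : ℝ) +
          β ^ (k + 1) * ∑' t : ℕ, β ^ t * (p2 (σ t) : ℝ) ≤
        ∑' t : ℕ, β ^ t * (p2 (σ t) : ℝ))

def d1 {A1 A2 : Type*} [Fintype A1] [Nonempty A1] (p1 : A1 × A2 → ℤ) (a : A1 × A2) : ℤ :=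
  Finset.univ.sup' Finset.univ_nonempty fun x => p1 (x, a.2)

def d2 {A1 A2 : Type*} [Fintype A2] [Nonempty A2] (p2 : A1 × A2 → ℤ) (a : A1 × A2) : ℤ :=
  Finset.univ.sup' Finset.univ_nonempty fun y => p2 (a.1, y)

open Filter Topology Finset

set_option maxHeartbeats 1000000 in
lemma key_lemma {A : Type*} [Fintype A] [Nonempty A] (q : A × A → ℤ) (h c₁ c₂ : A × A) (D M : ℝ) (T : ℕ)
    (σ : ℕ → A × A)
    (hσh : ∀ t, t < T → σ t = h)
    (hσ1 : ∀ t, T ≤ t → (t - T) % 2 = 0 → σ t = c₁)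
    (hσ2 : ∀ t, T ≤ t → (t - T) % 2 = 1 → σ t = c₂)
    (hD : ∀ x : A, (q (x, h.2) : ℝ) ≤ D)
    (hDv : D < ((q c₁ : ℝ) + (q c₂ : ℝ)) / 2)
    (hM : ∀ z : A × A, (q z : ℝ) ≤ M)
    (hT1 : 2 * M - (q c₁ : ℝ) - (q c₂ : ℝ) < T)
    (hT2 : 2 * M - 2 * (q c₂ : ℝ) < T) :
    ∃ β₀ ∈ Set.Ioo (0:ℝ) 1, ∀ β ∈ Set.Ioo β₀ 1, ∀ (k : ℕ) (x : A),
      (∑ t ∈ Finset.range k, β ^ t * (q (σ t) : ℝ)) + β ^ k * (q (x, (σ k).2) : ℝ) +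
        β ^ (k + 1) * ∑' t : ℕ, β ^ t * (q (σ t) : ℝ) ≤
      ∑' t : ℕ, β ^ t * (q (σ t) : ℝ) := by
  set C : ℝ := (q c₁ : ℝ) with hCdef
  set C' : ℝ := (q c₂ : ℝ) with hC'def
  set H : ℝ := (q h : ℝ) with hHdef
  have hHD : H ≤ D := hD h.1
  have hHv : H < (C + C') / 2 := lt_of_le_of_lt hHD hDv
  have hv2 : (1:ℝ)/2 ≤ (C + C')/2 - H := by
    have hHv' := hHv
    rw [hCdef, hC'def, hHdef] at hHv' ⊢
    have hz : 2 * (q h) < q c₁ + q c₂ := by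
      exact_mod_cast (by linarith : (2:ℝ) * (q h : ℝ) < (q c₁ : ℝ) + (q c₂ : ℝ))
    have hz' : (2 * q h + 1 : ℤ) ≤ q c₁ + q c₂ := hz
    have : (2*(q h : ℝ) + 1 : ℝ) ≤ (q c₁ : ℝ) + (q c₂ : ℝ) := by exact_mod_cast hz'
    linarith
  -- the four eventually-conditions on β
  have hgc : ContinuousAt (fun β : ℝ => (C + β * C') / (1 + β)) 1 := by
    apply ContinuousAt.div
    · fun_prop
    · fun_prop
    · norm_num
  have cont : ∀ (u : ℝ → ℝ), ContinuousAt u 1 → Tendsto u (𝓝[<] (1:ℝ)) (𝓝 (u 1)) :=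
    fun u hu => hu.tendsto.mono_left nhdsWithin_le_nhds
  have E0 : ∀ᶠ β in 𝓝[<] (1:ℝ), H < (C + β * C') / (1 + β) := by
    have := (cont _ hgc).eventually_const_lt (show H < (C + (1:ℝ) * C')/(1+1) by norm_num; linarith)
    exact this
  have E1 : ∀ᶠ β in 𝓝[<] (1:ℝ),
      D - H < β^(T+1) * ((C + β * C') / (1 + β) - H) := by
    have hc : ContinuousAt (fun β : ℝ => β^(T+1) * ((C + β * C') / (1 + β) - H)) 1 :=
      ((continuous_pow (T+1)).continuousAt).mul (hgc.sub continuousAt_const)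
    have hval : D - H < (1:ℝ)^(T+1) * ((C + (1:ℝ) * C')/(1+1) - H) := by norm_num; linarith
    exact (cont _ hc).eventually_const_lt hval
  have E2 : ∀ᶠ β in 𝓝[<] (1:ℝ),
      M - C < β * ((C' - C)/(1+β) + T * β^T * ((C + β * C') / (1 + β) - H)) := by
    have hc : ContinuousAt
        (fun β : ℝ => β * ((C' - C)/(1+β) + T * β^T * ((C + β * C') / (1 + β) - H))) 1 := by
      apply continuousAt_id.mul
      apply ContinuousAt.add
      · exact ContinuousAt.div continuousAt_const (by fun_prop) (by norm_num)
      · exact (ContinuousAt.mul continuousAt_const (continuous_pow T).continuousAt).mul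
          (hgc.sub continuousAt_const)
    have hval : M - C < (1:ℝ) * ((C' - C)/(1+1) + T * (1:ℝ)^T * ((C + (1:ℝ) * C')/(1+1) - H)) := by
      have hTnn : (0:ℝ) ≤ (T:ℝ) := Nat.cast_nonneg T
      have := mul_le_mul_of_nonneg_left hv2 hTnn
      norm_num
      nlinarith
    exact (cont _ hc).eventually_const_lt hval
  have E3 : ∀ᶠ β in 𝓝[<] (1:ℝ),
      M - C' < β * (T * β^T * ((C + β * C') / (1 + β) - H)) := by
    have hc : ContinuousAt
        (fun β : ℝ => β * (T * β^T * ((C + β * C') / (1 + β) - H))) 1 := by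
      apply continuousAt_id.mul
      exact (ContinuousAt.mul continuousAt_const (continuous_pow T).continuousAt).mul
          (hgc.sub continuousAt_const)
    have hval : M - C' < (1:ℝ) * ((T:ℝ) * (1:ℝ)^T * ((C + (1:ℝ) * C')/(1+1) - H)) := by
      have hTnn : (0:ℝ) ≤ (T:ℝ) := Nat.cast_nonneg T
      have := mul_le_mul_of_nonneg_left hv2 hTnn
      norm_num
      nlinarith
    exact (cont _ hc).eventually_const_lt hval
  have E := (E0.and (E1.and (E2.and E3)))
  rw [Filter.eventually_iff, mem_nhdsLT_iff_exists_Ioo_subset] at E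
  obtain ⟨l, hl, hsub⟩ := E
  refine ⟨max l (1/2), ⟨lt_max_of_lt_right (by norm_num), max_lt hl (by norm_num)⟩, ?_⟩
  rintro β ⟨hβl, hβ1⟩ k x
  have hβhalf : (1:ℝ)/2 < β := lt_of_le_of_lt (le_max_right _ _) hβl
  have hβ0 : (0:ℝ) < β := by linarith
  obtain ⟨h0, h1, h2, h3⟩ := hsub ⟨lt_of_le_of_lt (le_max_left _ _) hβl, hβ1⟩
  -- abbreviate
  set F : ℝ := (C + β * C') / (1 + β) with hFdef
  -- summability
  set M' : ℝ := Finset.univ.sup' Finset.univ_nonempty (fun z : A × A => |(q z : ℝ)|) with hM'def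
  have hM'le : ∀ z : A × A, |(q z : ℝ)| ≤ M' := fun z => by
    rw [hM'def]; exact Finset.le_sup' (fun z : A × A => |(q z : ℝ)|) (Finset.mem_univ z)
  have hsum : ∀ τ : ℕ → A × A, Summable (fun t => β ^ t * (q (τ t) : ℝ)) := by
    intro τ
    apply Summable.of_norm_bounded (g := fun t => M' * β ^ t)
      ((summable_geometric_of_lt_one hβ0.le hβ1).mul_left M')
    intro t
    rw [Real.norm_eq_abs, abs_mul, abs_pow, abs_of_pos hβ0, mul_comm]
    exact mul_le_mul_of_nonneg_right (hM'le _) (pow_nonneg hβ0.le t)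
  set W : ℕ → ℝ := fun m => ∑' t : ℕ, β ^ t * (q (σ (t + m)) : ℝ) with hWdef
  have hsplit : ∀ m j : ℕ, W m =
      (∑ t ∈ Finset.range j, β ^ t * (q (σ (t + m)) : ℝ)) + β ^ j * W (m + j) := by
    intro m j
    have hs := hsum (fun t => σ (t + m))
    have heq := (Summable.sum_add_tsum_nat_add j hs).symm
    rw [hWdef]
    simp only []
    rw [heq]
    congr 1
    have hterm : ∀ i : ℕ, β ^ (i + j) * (q (σ (i + j + m)) : ℝ)
        = β ^ j * (β ^ i * (q (σ (i + (m + j))) : ℝ)) := by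
      intro i
      rw [show i + j + m = i + (m + j) by omega, pow_add]
      ring
    rw [tsum_congr hterm, tsum_mul_left]
  have hWrec : ∀ m, W m = (q (σ m) : ℝ) + β * W (m + 1) := by
    intro m
    have := hsplit m 1
    simpa using this
  have h1mβ2 : (0:ℝ) < 1 - β^2 := by nlinarith
  have h1β : (0:ℝ) < 1 + β := by linarith
  set G : ℝ := (C + β * C') / (1 - β^2) with hGdef
  set G' : ℝ := (C' + β * C) / (1 - β^2) with hG'def
  have hper : ∀ s, T ≤ s → σ (s + 2) = σ s := by
    intro s hs
    by_cases hp : (s - T) % 2 = 0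
    · rw [hσ1 s hs hp, hσ1 (s+2) (by omega) (by omega)]
    · have hp1 : (s - T) % 2 = 1 := by omega
      rw [hσ2 s hs hp1, hσ2 (s+2) (by omega) (by omega)]
  have hWp : ∀ m, T ≤ m → W (m + 2) = W m := by
    intro m hm
    apply tsum_congr; intro t
    rw [show t + (m + 2) = (t + m) + 2 by omega, hper (t+m) (by omega)]
  have hWeven : ∀ m, T ≤ m → (m - T) % 2 = 0 → W m = G := by
    intro m hm hp
    have e1 : W m = C + β * W (m+1) := by rw [hWrec m, hσ1 m hm hp]
    have e2 : W (m+1) = C' + β * W (m+2) := by rw [hWrec (m+1), hσ2 (m+1) (by omega) (by omega)]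
    rw [hWp m hm] at e2
    rw [hGdef, eq_div_iff h1mβ2.ne']
    linear_combination e1 + β * e2
  have hWodd : ∀ m, T ≤ m → (m - T) % 2 = 1 → W m = G' := by
    intro m hm hp
    have e1 : W m = C' + β * W (m+1) := by rw [hWrec m, hσ2 m hm hp]
    have e2 : W (m+1) = G := hWeven (m+1) (by omega) (by omega)
    rw [e1, e2, hGdef, hG'def, eq_div_iff h1mβ2.ne']
    field_simp
    ring
  have hFH : 0 < F - H := by linarith
  -- claim A : lower bound on normalized tail values during hazing
  have hA : ∀ d, d ≤ T → H + β ^ d * (F - H) ≤ (1 - β) * W (T - d) := by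
    intro d
    induction d with
    | zero =>
      intro _
      have hWT : W (T - 0) = G := by
        rw [Nat.sub_zero]; exact hWeven T le_rfl (by simp)
      have hFG : (1 - β) * G = F := by
        rw [hGdef, hFdef]
        field_simp
        ring
      rw [hWT, hFG, pow_zero]
      linarith
    | succ d ih =>
      intro hd
      have ihd := ih (by omega)
      have hm : T - (d+1) < T := by omega
      have e1 : W (T - (d+1)) = H + β * W (T - d) := by
        rw [hWrec (T - (d+1)), hσh _ hm, show T - (d+1) + 1 = T - d by omega]
      rw [e1, pow_succ]
      have hb := mul_le_mul_of_nonneg_left ihd hβ0.le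
      nlinarith [hb]
  -- claim B : tail values increase along the hazing phase
  have hB : ∀ m, m ≤ T → W 0 + m * (β ^ T * (F - H)) ≤ W m := by
    intro m
    induction m with
    | zero => intro _; simp
    | succ m ih =>
      intro hm
      have ihm := ih (by omega)
      have hA' := hA (T - (m+1)) (by omega)
      rw [show T - (T - (m+1)) = m + 1 by omega] at hA'
      have e1 : W m = H + β * W (m + 1) := by rw [hWrec m, hσh m (by omega)]
      have hpow : β ^ T ≤ β ^ (T - (m+1)) := pow_le_pow_of_le_one hβ0.le hβ1.le (by omega)
      have hprod := mul_le_mul_of_nonneg_right hpow hFH.le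
      have step : W m + β ^ T * (F - H) ≤ W (m+1) := by linarith [hA', e1, hprod]
      push_cast
      nlinarith [ihm, step]
  have hWTG : W T = G := hWeven T le_rfl (by simp)
  have hGW0 : W 0 + T * (β ^ T * (F - H)) ≤ G := by rw [← hWTG]; exact hB T le_rfl
  have hG'G : G' = G + (C' - C) / (1 + β) := by
    rw [hGdef, hG'def]
    field_simp
    ring
  -- the central inequality
  have hkey : (q (x, (σ k).2) : ℝ) + β * W 0 ≤ (q (σ k) : ℝ) + β * W (k + 1) := by
    by_cases hk : k < T
    · have hσk : σ k = h := hσh k hk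
      have hdev : (q (x, (σ k).2) : ℝ) ≤ D := by rw [hσk]; exact hD x
      have hBk : W 0 + ((k:ℝ)+1) * (β ^ T * (F - H)) ≤ W (k+1) := by
        have := hB (k+1) (by omega)
        push_cast at this
        exact this
      have hk1 : (1:ℝ) ≤ (k:ℝ) + 1 := by
        have : (0:ℝ) ≤ (k:ℝ) := Nat.cast_nonneg k
        linarith
      have hmul := mul_le_mul_of_nonneg_left hBk hβ0.le
      have hge : β ^ T * (F - H) ≤ ((k:ℝ)+1) * (β ^ T * (F - H)) :=
        le_mul_of_one_le_left (by positivity) hk1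
      have hmul2 := mul_le_mul_of_nonneg_left hge hβ0.le
      rw [pow_succ] at h1
      have hσkH : (q (σ k) : ℝ) = H := by rw [hσk]
      rw [hσkH]
      linarith [hmul, hmul2, h1, hdev]
    · push_neg at hk
      have hdev : (q (x, (σ k).2) : ℝ) ≤ M := hM _
      have hmul := mul_le_mul_of_nonneg_left hGW0 hβ0.le
      by_cases hp : (k - T) % 2 = 0
      · have hσk : σ k = c₁ := hσ1 k hk hp
        have hWk1 : W (k+1) = G' := hWodd (k+1) (by omega) (by omega)
        have hσkC : (q (σ k) : ℝ) = C := by rw [hσk]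
        rw [hσkC, hWk1, hG'G]
        linarith [hmul, h2, hdev]
      · have hp1 : (k - T) % 2 = 1 := by omega
        have hσk : σ k = c₂ := hσ2 k hk hp1
        have hWk1 : W (k+1) = G := hWeven (k+1) (by omega) (by omega)
        have hσkC : (q (σ k) : ℝ) = C' := by rw [hσk]
        rw [hσkC, hWk1]
        linarith [hmul, h3, hdev]
  -- assemble
  have hV : (∑' t : ℕ, β ^ t * (q (σ t) : ℝ)) = W 0 := by
    rw [hWdef]
    exact tsum_congr (fun t => by rw [Nat.add_zero])
  have hsplitk : W 0 = (∑ t ∈ Finset.range k, β ^ t * (q (σ t) : ℝ))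
      + β ^ k * ((q (σ k) : ℝ) + β * W (k + 1)) := by
    have hs := hsplit 0 k
    simp only [Nat.add_zero, Nat.zero_add] at hs
    rw [hWrec k] at hs
    exact hs
  have hpk : (0:ℝ) ≤ β ^ k := pow_nonneg hβ0.le k
  rw [hV]
  calc (∑ t ∈ Finset.range k, β ^ t * (q (σ t) : ℝ)) + β ^ k * (q (x, (σ k).2) : ℝ)
        + β ^ (k+1) * W 0
      = (∑ t ∈ Finset.range k, β ^ t * (q (σ t) : ℝ))
        + β ^ k * ((q (x, (σ k).2) : ℝ) + β * W 0) := by rw [pow_succ]; ring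
    _ ≤ (∑ t ∈ Finset.range k, β ^ t * (q (σ t) : ℝ))
        + β ^ k * ((q (σ k) : ℝ) + β * W (k + 1)) := by
          have := mul_le_mul_of_nonneg_left hkey hpk
          linarith
    _ = W 0 := hsplitk.symm

theorem alternating_goal_sequence {A : Type*} [Fintype A] [Nonempty A]
    (p1 p2 : A × A → ℤ)
    (hsym : ∀ c : A × A, p2 c = p1 (c.2, c.1))
    (aStar : A × A)
    (hmaxsw : ∀ c : A × A, p1 c + p2 c ≤ p1 aStar + p2 aStar)
    (a : A × A)
    (hd1 : (d1 p1 a : ℝ) < ((p1 aStar : ℝ) + (p2 aStar : ℝ)) / 2)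
    (hd2 : (d2 p2 a : ℝ) < ((p1 aStar : ℝ) + (p2 aStar : ℝ)) / 2) :
    -- goal values of γ = (a*, swap a*) are both half the maximum social welfare
    (((p1 aStar : ℝ) + (p1 (aStar.2, aStar.1) : ℝ)) / 2 =
        ((p1 aStar : ℝ) + (p2 aStar : ℝ)) / 2) ∧
    (((p2 aStar : ℝ) + (p2 (aStar.2, aStar.1) : ℝ)) / 2 =
        ((p1 aStar : ℝ) + (p2 aStar : ℝ)) / 2) ∧
    -- hazing with a for T steps and then alternating is stable for large β
    (∃ (T : ℕ) (β₀ : ℝ), β₀ ∈ Set.Ioo (0 : ℝ) 1 ∧ ∀ β ∈ Set.Ioo β₀ 1,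
      IsStable β p1 p2 (fun t =>
        if t < T then a
        else if (t - T) % 2 = 0 then aStar else (aStar.2, aStar.1))) := by
  have hsw : p1 (aStar.2, aStar.1) = p2 aStar := (hsym aStar).symm
  have hswR : (p1 (aStar.2, aStar.1) : ℝ) = (p2 aStar : ℝ) := by rw [hsw]
  have h2R : (p2 (aStar.2, aStar.1) : ℝ) = (p1 aStar : ℝ) := by
    rw [hsym (aStar.2, aStar.1)]
  refine ⟨by rw [hswR], by rw [h2R]; ring, ?_⟩
  set M : ℤ := Finset.univ.sup' Finset.univ_nonempty (fun z : A × A => p1 z) with hMdef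
  have hM : ∀ z : A × A, (p1 z : ℝ) ≤ (M : ℝ) := fun z => by
    have : p1 z ≤ M := by
      rw [hMdef]; exact Finset.le_sup' (fun z : A × A => p1 z) (Finset.mem_univ z)
    exact_mod_cast this
  have hcast : ∀ z : ℤ, (z : ℝ) ≤ (z.toNat : ℝ) := fun z => by
    exact_mod_cast Int.self_le_toNat z
  set T : ℕ := (2*M - p1 aStar - p2 aStar).toNat + (2*M - 2*p1 aStar).toNat
      + (2*M - 2*p2 aStar).toNat + 1 with hTdef
  have hTreal : ((2*M - p1 aStar - p2 aStar).toNat : ℝ) + ((2*M - 2*p1 aStar).toNat : ℝ)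
      + ((2*M - 2*p2 aStar).toNat : ℝ) + 1 = (T : ℝ) := by
    rw [hTdef]; push_cast; ring
  have hTa : 2*(M:ℝ) - (p1 aStar : ℝ) - (p2 aStar : ℝ) < (T : ℝ) := by
    have h1 := hcast (2*M - p1 aStar - p2 aStar)
    have h2 : (0:ℝ) ≤ ((2*M - 2*p1 aStar).toNat : ℝ) := Nat.cast_nonneg _
    have h3 : (0:ℝ) ≤ ((2*M - 2*p2 aStar).toNat : ℝ) := Nat.cast_nonneg _
    push_cast at h1
    linarith [hTreal]
  have hTb : 2*(M:ℝ) - 2*(p1 aStar : ℝ) < (T : ℝ) := by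
    have h1 := hcast (2*M - 2*p1 aStar)
    have h2 : (0:ℝ) ≤ ((2*M - p1 aStar - p2 aStar).toNat : ℝ) := Nat.cast_nonneg _
    have h3 : (0:ℝ) ≤ ((2*M - 2*p2 aStar).toNat : ℝ) := Nat.cast_nonneg _
    push_cast at h1
    linarith [hTreal]
  have hTc : 2*(M:ℝ) - 2*(p2 aStar : ℝ) < (T : ℝ) := by
    have h1 := hcast (2*M - 2*p2 aStar)
    have h2 : (0:ℝ) ≤ ((2*M - p1 aStar - p2 aStar).toNat : ℝ) := Nat.cast_nonneg _
    have h3 : (0:ℝ) ≤ ((2*M - 2*p1 aStar).toNat : ℝ) := Nat.cast_nonneg _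
    push_cast at h1
    linarith [hTreal]
  set σ : ℕ → A × A := fun t =>
    if t < T then a else if (t - T) % 2 = 0 then aStar else (aStar.2, aStar.1) with hσdef
  have hσh1 : ∀ t, t < T → σ t = a := fun t ht => by
    simp only [hσdef]; rw [if_pos ht]
  have hσ11 : ∀ t, T ≤ t → (t - T) % 2 = 0 → σ t = aStar := fun t ht hp => by
    simp only [hσdef]; rw [if_neg (by omega), if_pos hp]
  have hσ21 : ∀ t, T ≤ t → (t - T) % 2 = 1 → σ t = (aStar.2, aStar.1) := fun t ht hp => by
    simp only [hσdef]; rw [if_neg (by omega), if_neg (by omega)]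
  have hD1 : ∀ x : A, (p1 (x, a.2) : ℝ) ≤ (d1 p1 a : ℝ) := fun x => by
    have : p1 (x, a.2) ≤ d1 p1 a := Finset.le_sup' (fun y => p1 (y, a.2)) (Finset.mem_univ x)
    exact_mod_cast this
  obtain ⟨β₁, hβ₁, hst1⟩ := key_lemma p1 a aStar (aStar.2, aStar.1)
    (d1 p1 a : ℝ) (M : ℝ) T σ hσh1 hσ11 hσ21 hD1
    (by rw [hswR]; exact hd1) hM
    (by rw [hswR]; exact hTa) (by rw [hswR]; exact hTc)
  have hσh2 : ∀ t, t < T → ((σ t).2, (σ t).1) = (a.2, a.1) := fun t ht => by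
    rw [hσh1 t ht]
  have hσ12 : ∀ t, T ≤ t → (t - T) % 2 = 0 → ((σ t).2, (σ t).1) = (aStar.2, aStar.1) :=
    fun t ht hp => by rw [hσ11 t ht hp]
  have hσ22 : ∀ t, T ≤ t → (t - T) % 2 = 1 → ((σ t).2, (σ t).1) = (aStar.1, aStar.2) :=
    fun t ht hp => by rw [hσ21 t ht hp]
  have hD2 : ∀ x : A, (p1 (x, a.1) : ℝ) ≤ (d2 p2 a : ℝ) := fun x => by
    have h' : p2 (a.1, x) = p1 (x, a.1) := hsym (a.1, x)
    have hle : p2 (a.1, x) ≤ d2 p2 a :=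
      Finset.le_sup' (fun y => p2 (a.1, y)) (Finset.mem_univ x)
    rw [h'] at hle
    exact_mod_cast hle
  have hDv2 : (d2 p2 a : ℝ) < ((p1 (aStar.2, aStar.1) : ℝ) + (p1 (aStar.1, aStar.2) : ℝ))/2 := by
    show (d2 p2 a : ℝ) < ((p1 (aStar.2, aStar.1) : ℝ) + (p1 aStar : ℝ))/2
    rw [hswR]; linarith [hd2]
  have hT2a : 2*(M:ℝ) - (p1 (aStar.2, aStar.1) : ℝ) - (p1 (aStar.1, aStar.2) : ℝ) < (T : ℝ) := by
    show 2*(M:ℝ) - (p1 (aStar.2, aStar.1) : ℝ) - (p1 aStar : ℝ) < (T : ℝ)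
    rw [hswR]; linarith [hTa]
  have hT2b : 2*(M:ℝ) - 2*(p1 (aStar.1, aStar.2) : ℝ) < (T : ℝ) := by
    show 2*(M:ℝ) - 2*(p1 aStar : ℝ) < (T : ℝ)
    exact hTb
  obtain ⟨β₂, hβ₂, hst2⟩ := key_lemma p1 (a.2, a.1) (aStar.2, aStar.1) (aStar.1, aStar.2)
    (d2 p2 a : ℝ) (M : ℝ) T (fun t => ((σ t).2, (σ t).1)) hσh2 hσ12 hσ22 hD2
    hDv2 hM hT2a hT2b
  refine ⟨T, max β₁ β₂, ⟨lt_max_of_lt_left hβ₁.1, max_lt hβ₁.2 hβ₂.2⟩, ?_⟩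
  intro β hβ
  have hb1 : β ∈ Set.Ioo β₁ 1 := ⟨lt_of_le_of_lt (le_max_left _ _) hβ.1, hβ.2⟩
  have hb2 : β ∈ Set.Ioo β₂ 1 := ⟨lt_of_le_of_lt (le_max_right _ _) hβ.1, hβ.2⟩
  refine ⟨fun k x => hst1 β hb1 k x, fun k b => ?_⟩
  have hh := hst2 β hb2 k b
  simp only at hh
  have e1 : ∀ t, (p2 (σ t) : ℝ) = (p1 ((σ t).2, (σ t).1) : ℝ) := fun t => by
    rw [hsym (σ t)]
  have e2 : (p2 ((σ k).1, b) : ℝ) = (p1 (b, (σ k).1) : ℝ) := by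
    rw [hsym ((σ k).1, b)]
  change (∑ t ∈ Finset.range k, β ^ t * (p2 (σ t) : ℝ)) + β ^ k * (p2 ((σ k).1, b) : ℝ) +
      β ^ (k + 1) * ∑' t : ℕ, β ^ t * (p2 (σ t) : ℝ) ≤ ∑' t : ℕ, β ^ t * (p2 (σ t) : ℝ)
  simp only [e1, e2]
  exact hh

end Stmt13
end

section
/- Let γ ∈ A^r be a goal sequence and define the threshold of γ for player i as θ_γ^(i) = max_{k ∈ [r]} ( t_{γ_k}^(i) − ∑_{t=1}^{k−1} h_{γ_t}^(i) ). Then a sequence σ formed by a hazing period of length T followed by infinitely repeating γ is stable in the β → 1 limit if and only if (a) for every timestep k < T and each i, H_{k−1}^(i) > t_{σ_k}^(i), and (b) for each i, H_{T−1}^(i) > θ_γ^(i), where additionally the per-period hazing over one full cycle of γ is non-negative for each player (∑_{t=1}^{r} h_{γ_t}^(i) ≥ 0). -/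
/-!
Statement 15: characterization of stability in the β → 1 limit via the threshold
of the goal sequence: a sequence with hazing period of length `T` followed by
infinite repetition of `γ` is stable in the β → 1 limit iff the hazing-period
stability conditions hold for all timesteps `k < T` and the accumulated hazing
`H_{T−1}^{(i)}` strictly exceeds the goal-sequence threshold
`θ_γ^{(i)} = max_{k ∈ [r]} (t_{γ_k}^{(i)} − ∑_{t=1}^{k−1} h_{γ_t}^{(i)})`,
given additionally that each player's hazing over one full cycle of `γ` is
non-negative.
-/

namespace Stmt15

def d1 {A1 A2 : Type*} [Fintype A1] [Nonempty A1] (p1 : A1 × A2 → ℤ) (a : A1 × A2) : ℤ :=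
  Finset.univ.sup' Finset.univ_nonempty fun x => p1 (x, a.2)

def d2 {A1 A2 : Type*} [Fintype A2] [Nonempty A2] (p2 : A1 × A2 → ℤ) (a : A1 × A2) : ℤ :=
  Finset.univ.sup' Finset.univ_nonempty fun y => p2 (a.1, y)

noncomputable def v1 {A1 A2 : Type*} (p1 : A1 × A2 → ℤ) {r : ℕ} (γ : Fin r → A1 × A2) : ℝ :=
  (1 / r) * ∑ j : Fin r, (p1 (γ j) : ℝ)

noncomputable def v2 {A1 A2 : Type*} (p2 : A1 × A2 → ℤ) {r : ℕ} (γ : Fin r → A1 × A2) : ℝ :=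
  (1 / r) * ∑ j : Fin r, (p2 (γ j) : ℝ)

/-- Hazing cost of action pair `a` for player 1. -/
noncomputable def h1 {A1 A2 : Type*} (p1 : A1 × A2 → ℤ) {r : ℕ} (γ : Fin r → A1 × A2)
    (a : A1 × A2) : ℝ := v1 p1 γ - (p1 a : ℝ)

noncomputable def h2 {A1 A2 : Type*} (p2 : A1 × A2 → ℤ) {r : ℕ} (γ : Fin r → A1 × A2)
    (a : A1 × A2) : ℝ := v2 p2 γ - (p2 a : ℝ)

/-- Threshold of action pair `a` for player 1. -/
noncomputable def thr1 {A1 A2 : Type*} [Fintype A1] [Nonempty A1] (p1 : A1 × A2 → ℤ)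
    {r : ℕ} (γ : Fin r → A1 × A2) (a : A1 × A2) : ℝ := (d1 p1 a : ℝ) - v1 p1 γ

noncomputable def thr2 {A1 A2 : Type*} [Fintype A2] [Nonempty A2] (p2 : A1 × A2 → ℤ)
    {r : ℕ} (γ : Fin r → A1 × A2) (a : A1 × A2) : ℝ := (d2 p2 a : ℝ) - v2 p2 γ

/-- Threshold of the goal sequence `γ` for player 1:
`θ_γ^{(1)} = max_k (t_{γ_k}^{(1)} − ∑_{t<k} h_{γ_t}^{(1)})`. -/
noncomputable def θ1 {A1 A2 : Type*} [Fintype A1] [Nonempty A1] (p1 : A1 × A2 → ℤ)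
    {r : ℕ} (hr : 0 < r) (γ : Fin r → A1 × A2) : ℝ :=
  Finset.univ.sup' (Finset.univ_nonempty_iff.mpr ⟨⟨0, hr⟩⟩) fun k : Fin r =>
    thr1 p1 γ (γ k) - ∑ t ∈ Finset.range k.val, h1 p1 γ (γ ⟨t % r, Nat.mod_lt _ hr⟩)

noncomputable def θ2 {A1 A2 : Type*} [Fintype A2] [Nonempty A2] (p2 : A1 × A2 → ℤ)
    {r : ℕ} (hr : 0 < r) (γ : Fin r → A1 × A2) : ℝ :=
  Finset.univ.sup' (Finset.univ_nonempty_iff.mpr ⟨⟨0, hr⟩⟩) fun k : Fin r =>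
    thr2 p2 γ (γ k) - ∑ t ∈ Finset.range k.val, h2 p2 γ (γ ⟨t % r, Nat.mod_lt _ hr⟩)

/-- Stability in the β → 1 limit. -/
noncomputable def LimitStable {A1 A2 : Type*} [Fintype A1] [Fintype A2] [Nonempty A1]
    [Nonempty A2] (p1 p2 : A1 × A2 → ℤ) {r : ℕ} (γ : Fin r → A1 × A2)
    (σ : ℕ → A1 × A2) : Prop :=
  ∀ k : ℕ,
    (∑ t ∈ Finset.range k, h1 p1 γ (σ t) > thr1 p1 γ (σ k)) ∧
    (∑ t ∈ Finset.range k, h2 p2 γ (σ t) > thr2 p2 γ (σ k))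


private lemma sum_range_mod_eq (r : ℕ) (hr : 0 < r) (f : Fin r → ℝ) (hf : ∑ j, f j = 0) :
    ∀ m : ℕ, ∑ s ∈ Finset.range m, f ⟨s % r, Nat.mod_lt _ hr⟩
      = ∑ s ∈ Finset.range (m % r), f ⟨s % r, Nat.mod_lt _ hr⟩ := by
  haveI : NeZero r := ⟨hr.ne'⟩
  have cyc : ∀ a : ℕ, ∑ s ∈ Finset.range r, f ⟨(a + s) % r, Nat.mod_lt _ hr⟩ = 0 := by
    intro a
    rw [← Fin.sum_univ_eq_sum_range (fun s => f ⟨(a + s) % r, Nat.mod_lt _ hr⟩)]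
    have : ∀ s : Fin r, f ⟨(a + s.val) % r, Nat.mod_lt _ hr⟩ = f (Fin.ofNat r a + s) := by
      intro s
      congr 1
      ext
      simp [Fin.add_def, Fin.val_natCast, Fin.val_ofNat, Nat.add_mod]
    rw [Finset.sum_congr rfl (fun s _ => this s)]
    rw [← hf]
    exact Fintype.sum_equiv (Equiv.addLeft (Fin.ofNat r a)) _ _ (fun s => rfl)
  intro m
  induction m using Nat.strong_induction_on with
  | _ m ih =>
    rcases lt_or_ge m r with h | h
    · rw [Nat.mod_eq_of_lt h]
    · have h1 : m = (m - r) + r := by omega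
      have h2 : m % r = (m - r) % r := by
        conv_lhs => rw [h1]
        rw [Nat.add_mod_right]
      conv_lhs => rw [h1]
      rw [Finset.sum_range_add, cyc, add_zero, ih _ (by omega), h2]

private lemma key_iff (r : ℕ) (hr : 0 < r) (f th : Fin r → ℝ) (hf : ∑ j, f j = 0) (C : ℝ) :
    (∀ m : ℕ, C + ∑ s ∈ Finset.range m, f ⟨s % r, Nat.mod_lt _ hr⟩ > th ⟨m % r, Nat.mod_lt _ hr⟩)
    ↔ C > (Finset.univ.sup' (Finset.univ_nonempty_iff.mpr ⟨⟨0, hr⟩⟩) fun k : Fin r =>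
        th k - ∑ t ∈ Finset.range k.val, f ⟨t % r, Nat.mod_lt _ hr⟩) := by
  rw [gt_iff_lt, Finset.sup'_lt_iff]
  constructor
  · intro h k _
    have := h k.val
    have hk : (⟨k.val % r, Nat.mod_lt _ hr⟩ : Fin r) = k := Fin.ext (Nat.mod_eq_of_lt k.isLt)
    rw [hk] at this
    linarith
  · intro h m
    have := h ⟨m % r, Nat.mod_lt _ hr⟩ (Finset.mem_univ _)
    rw [sum_range_mod_eq r hr f hf m]
    simp only at this
    have heq : ∑ t ∈ Finset.range (m % r), f ⟨t % r, Nat.mod_lt _ hr⟩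
        = ∑ t ∈ Finset.range ((⟨m % r, Nat.mod_lt _ hr⟩ : Fin r) : ℕ), f ⟨t % r, Nat.mod_lt _ hr⟩ := rfl
    rw [heq]
    linarith

theorem goal_threshold_characterization {A1 A2 : Type*} [Fintype A1] [Fintype A2]
    [Nonempty A1] [Nonempty A2]
    (p1 p2 : A1 × A2 → ℤ) (r : ℕ) (hr : 0 < r) (γ : Fin r → A1 × A2)
    (σ : ℕ → A1 × A2) (T : ℕ)
    (htail : ∀ t : ℕ, T ≤ t → σ t = γ ⟨(t - T) % r, Nat.mod_lt _ hr⟩)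
    (hcycle1 : 0 ≤ ∑ j : Fin r, h1 p1 γ (γ j))
    (hcycle2 : 0 ≤ ∑ j : Fin r, h2 p2 γ (γ j)) :
    LimitStable p1 p2 γ σ ↔
      ((∀ k : ℕ, k < T →
          (∑ t ∈ Finset.range k, h1 p1 γ (σ t) > thr1 p1 γ (σ k)) ∧
          (∑ t ∈ Finset.range k, h2 p2 γ (σ t) > thr2 p2 γ (σ k))) ∧
        (∑ t ∈ Finset.range T, h1 p1 γ (σ t) > θ1 p1 hr γ) ∧
        (∑ t ∈ Finset.range T, h2 p2 γ (σ t) > θ2 p2 hr γ)) := by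
  haveI : NeZero r := ⟨hr.ne'⟩
  have hrR : (r : ℝ) ≠ 0 := Nat.cast_ne_zero.mpr hr.ne'
  have hz1 : ∑ j : Fin r, h1 p1 γ (γ j) = 0 := by
    simp only [h1, Finset.sum_sub_distrib, Finset.sum_const, Finset.card_univ,
      Fintype.card_fin, nsmul_eq_mul, v1]
    field_simp
    ring
  have hz2 : ∑ j : Fin r, h2 p2 γ (γ j) = 0 := by
    simp only [h2, Finset.sum_sub_distrib, Finset.sum_const, Finset.card_univ,
      Fintype.card_fin, nsmul_eq_mul, v2]
    field_simp
    ring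
  have hσ : ∀ s : ℕ, σ (T + s) = γ ⟨s % r, Nat.mod_lt _ hr⟩ := by
    intro s
    rw [htail (T + s) (Nat.le_add_right _ _)]
    congr 1
    ext
    simp
  have hsplit1 : ∀ m : ℕ, ∑ t ∈ Finset.range (T + m), h1 p1 γ (σ t)
      = ∑ t ∈ Finset.range T, h1 p1 γ (σ t)
        + ∑ s ∈ Finset.range m, h1 p1 γ (γ ⟨s % r, Nat.mod_lt _ hr⟩) := by
    intro m
    rw [Finset.sum_range_add]
    congr 1
    exact Finset.sum_congr rfl fun s _ => by rw [hσ s]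
  have hsplit2 : ∀ m : ℕ, ∑ t ∈ Finset.range (T + m), h2 p2 γ (σ t)
      = ∑ t ∈ Finset.range T, h2 p2 γ (σ t)
        + ∑ s ∈ Finset.range m, h2 p2 γ (γ ⟨s % r, Nat.mod_lt _ hr⟩) := by
    intro m
    rw [Finset.sum_range_add]
    congr 1
    exact Finset.sum_congr rfl fun s _ => by rw [hσ s]
  have key1 := key_iff r hr (fun j => h1 p1 γ (γ j)) (fun j => thr1 p1 γ (γ j)) hz1
    (∑ t ∈ Finset.range T, h1 p1 γ (σ t))
  have key2 := key_iff r hr (fun j => h2 p2 γ (γ j)) (fun j => thr2 p2 γ (γ j)) hz2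
    (∑ t ∈ Finset.range T, h2 p2 γ (σ t))
  constructor
  · intro hstab
    refine ⟨fun k _ => hstab k, ?_, ?_⟩
    · rw [θ1, ← key1]
      intro m
      have := (hstab (T + m)).1
      rw [hsplit1 m, hσ m] at this
      exact this
    · rw [θ2, ← key2]
      intro m
      have := (hstab (T + m)).2
      rw [hsplit2 m, hσ m] at this
      exact this
  · rintro ⟨hhead, ht1, ht2⟩
    intro k
    rcases lt_or_ge k T with h | h
    · exact hhead k h
    · obtain ⟨m, rfl⟩ : ∃ m, k = T + m := ⟨k - T, by omega⟩
      rw [θ1, ← key1] at ht1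
      rw [θ2, ← key2] at ht2
      constructor
      · rw [hsplit1 m, hσ m]
        exact ht1 m
      · rw [hsplit2 m, hσ m]
        exact ht2 m


end Stmt15
end

section
/- In the repeated game with restarts and random player reassignment, if no player can profit from a single deviation, then no player can profit from any finite number of deviations: formally, if for all i ∈ {1,2} and all k, ∑_{t=0}^{k-1} β^t p^(i)(σ_t) + β^k d_{σ_k}^(i) + ∑_{t=0}^∞ β^{k+1+t} (p^(1)(σ_t) + p^(2)(σ_t))/2 ≤ ∑_{t=0}^∞ β^t p^(i)(σ_t), then deviating multiple times (with role reassignment by fair coin flip after each restart) cannot yield strictly greater expected discounted utility for either player. -/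
/-!
Statement 18: one-shot deviation principle with random player reassignment.
A deviation plan specifies, for each of the (randomly assigned) roles, whether to
deviate in the current relationship, at what time, with which action, and how to
continue after the restart (the role after each restart is resampled uniformly).
If no player can profit from a single deviation (using the maximal deviation
payoff `d` and the averaged continuation value), then no plan with any finite
number of deviations yields strictly greater expected discounted utility for
either role.
-/

namespace Stmt18

def d1 {A1 A2 : Type*} [Fintype A1] [Nonempty A1] (p1 : A1 × A2 → ℤ) (a : A1 × A2) : ℤ :=
  Finset.univ.sup' Finset.univ_nonempty fun x => p1 (x, a.2)

def d2 {A1 A2 : Type*} [Fintype A2] [Nonempty A2] (p2 : A1 × A2 → ℤ) (a : A1 × A2) : ℤ :=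
  Finset.univ.sup' Finset.univ_nonempty fun y => p2 (a.1, y)

/-- A role-dependent deviation plan: `follow` means follow `σ` forever in either
role; `dev1 k a rest` means deviate at time `k` with action `a` if in role 1 (and
follow forever if in role 2), continuing with `rest` after the restart; similarly
`dev2`; `devBoth` deviates in both roles (with possibly different times, actions
and continuations). -/
inductive Plan (A1 A2 : Type*) where
  | follow : Plan A1 A2
  | dev1 (k : ℕ) (a : A1) (rest : Plan A1 A2) : Plan A1 A2
  | dev2 (k : ℕ) (b : A2) (rest : Plan A1 A2) : Plan A1 A2
  | devBoth (k₁ : ℕ) (a : A1) (rest₁ : Plan A1 A2) (k₂ : ℕ) (b : A2) (rest₂ : Plan A1 A2) :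
      Plan A1 A2

/-- Expected discounted utility of executing a plan from the given role
(`true` = role 1, `false` = role 2); after each restart the role is resampled
uniformly, whence the average of the two continuation values. -/
noncomputable def EU {A1 A2 : Type*} (β : ℝ) (p1 p2 : A1 × A2 → ℤ) (σ : ℕ → A1 × A2) :
    Plan A1 A2 → Bool → ℝ
  | .follow, true => ∑' t : ℕ, β ^ t * (p1 (σ t) : ℝ)
  | .follow, false => ∑' t : ℕ, β ^ t * (p2 (σ t) : ℝ)
  | .dev1 k a rest, true =>
      (∑ t ∈ Finset.range k, β ^ t * (p1 (σ t) : ℝ)) + β ^ k * (p1 (a, (σ k).2) : ℝ) +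
        β ^ (k + 1) * ((EU β p1 p2 σ rest true + EU β p1 p2 σ rest false) / 2)
  | .dev1 _ _ _, false => ∑' t : ℕ, β ^ t * (p2 (σ t) : ℝ)
  | .dev2 _ _ _, true => ∑' t : ℕ, β ^ t * (p1 (σ t) : ℝ)
  | .dev2 k b rest, false =>
      (∑ t ∈ Finset.range k, β ^ t * (p2 (σ t) : ℝ)) + β ^ k * (p2 ((σ k).1, b) : ℝ) +
        β ^ (k + 1) * ((EU β p1 p2 σ rest true + EU β p1 p2 σ rest false) / 2)
  | .devBoth k₁ a rest₁ _ _ _, true =>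
      (∑ t ∈ Finset.range k₁, β ^ t * (p1 (σ t) : ℝ)) + β ^ k₁ * (p1 (a, (σ k₁).2) : ℝ) +
        β ^ (k₁ + 1) * ((EU β p1 p2 σ rest₁ true + EU β p1 p2 σ rest₁ false) / 2)
  | .devBoth _ _ _ k₂ b rest₂, false =>
      (∑ t ∈ Finset.range k₂, β ^ t * (p2 (σ t) : ℝ)) + β ^ k₂ * (p2 ((σ k₂).1, b) : ℝ) +
        β ^ (k₂ + 1) * ((EU β p1 p2 σ rest₂ true + EU β p1 p2 σ rest₂ false) / 2)

theorem one_shot_deviation_random_reassignment {A1 A2 : Type*}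
    [Fintype A1] [Fintype A2] [Nonempty A1] [Nonempty A2]
    (β : ℝ) (hβ : β ∈ Set.Ioo (0 : ℝ) 1) (p1 p2 : A1 × A2 → ℤ) (σ : ℕ → A1 × A2)
    (hone1 : ∀ k : ℕ,
      (∑ t ∈ Finset.range k, β ^ t * (p1 (σ t) : ℝ)) + β ^ k * (d1 p1 (σ k) : ℝ) +
          (∑' t : ℕ, β ^ (k + 1 + t) * (((p1 (σ t) : ℝ) + (p2 (σ t) : ℝ)) / 2)) ≤
        ∑' t : ℕ, β ^ t * (p1 (σ t) : ℝ))
    (hone2 : ∀ k : ℕ,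
      (∑ t ∈ Finset.range k, β ^ t * (p2 (σ t) : ℝ)) + β ^ k * (d2 p2 (σ k) : ℝ) +
          (∑' t : ℕ, β ^ (k + 1 + t) * (((p1 (σ t) : ℝ) + (p2 (σ t) : ℝ)) / 2)) ≤
        ∑' t : ℕ, β ^ t * (p2 (σ t) : ℝ)) :
    ∀ (plan : Plan A1 A2) (role : Bool),
      EU β p1 p2 σ plan role ≤ EU β p1 p2 σ Plan.follow role := by
  obtain ⟨hβ0, hβ1⟩ := hβ
  have hβnn : (0:ℝ) ≤ β := le_of_lt hβ0
  have hsum : ∀ q : A1 × A2 → ℤ, Summable (fun t : ℕ => β ^ t * (q (σ t) : ℝ)) := by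
    intro q
    have hC : ∀ a : A1 × A2, |(q a : ℝ)| ≤
        Finset.univ.sup' Finset.univ_nonempty (fun a => |(q a : ℝ)|) :=
      fun a => Finset.le_sup' (fun a => |(q a : ℝ)|) (Finset.mem_univ a)
    apply Summable.of_norm_bounded
      (g := fun t : ℕ => β ^ t * Finset.univ.sup' Finset.univ_nonempty (fun a => |(q a : ℝ)|))
      ((summable_geometric_of_lt_one hβnn hβ1).mul_right _)
    intro t
    rw [norm_mul, norm_pow, Real.norm_of_nonneg hβnn]
    exact mul_le_mul_of_nonneg_left (hC _) (pow_nonneg hβnn t)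
  have hs1 := hsum p1
  have hs2 := hsum p2
  -- tail rewriting
  have htail : ∀ k : ℕ,
      (∑' t : ℕ, β ^ (k + 1 + t) * (((p1 (σ t) : ℝ) + (p2 (σ t) : ℝ)) / 2)) =
      β ^ (k + 1) * (((∑' t : ℕ, β ^ t * (p1 (σ t) : ℝ)) +
        (∑' t : ℕ, β ^ t * (p2 (σ t) : ℝ))) / 2) := by
    intro k
    have : ∀ t : ℕ, β ^ (k + 1 + t) * (((p1 (σ t) : ℝ) + (p2 (σ t) : ℝ)) / 2) =
        β ^ (k + 1) * ((β ^ t * (p1 (σ t) : ℝ) + β ^ t * (p2 (σ t) : ℝ)) / 2) := by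
      intro t; rw [pow_add]; ring
    rw [tsum_congr this, tsum_mul_left]
    congr 1
    rw [← Summable.tsum_add hs1 hs2]
    exact tsum_div_const
  intro plan
  induction plan with
  | follow => intro role; cases role <;> exact le_refl _
  | dev1 k a rest ih =>
    intro role
    cases role
    · exact le_refl _
    · simp only [EU]
      calc (∑ t ∈ Finset.range k, β ^ t * (p1 (σ t) : ℝ)) + β ^ k * (p1 (a, (σ k).2) : ℝ) +
            β ^ (k + 1) * ((EU β p1 p2 σ rest true + EU β p1 p2 σ rest false) / 2)
          ≤ (∑ t ∈ Finset.range k, β ^ t * (p1 (σ t) : ℝ)) + β ^ k * (d1 p1 (σ k) : ℝ) +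
            β ^ (k + 1) * (((∑' t : ℕ, β ^ t * (p1 (σ t) : ℝ)) +
              (∑' t : ℕ, β ^ t * (p2 (σ t) : ℝ))) / 2) := by
            gcongr
            · exact_mod_cast Finset.le_sup' (fun x => p1 (x, (σ k).2)) (Finset.mem_univ a)
            · exact ih true
            · exact ih false
        _ ≤ ∑' t : ℕ, β ^ t * (p1 (σ t) : ℝ) := by rw [← htail k]; exact hone1 k
  | dev2 k b rest ih =>
    intro role
    cases role
    · simp only [EU]
      calc (∑ t ∈ Finset.range k, β ^ t * (p2 (σ t) : ℝ)) + β ^ k * (p2 ((σ k).1, b) : ℝ) +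
            β ^ (k + 1) * ((EU β p1 p2 σ rest true + EU β p1 p2 σ rest false) / 2)
          ≤ (∑ t ∈ Finset.range k, β ^ t * (p2 (σ t) : ℝ)) + β ^ k * (d2 p2 (σ k) : ℝ) +
            β ^ (k + 1) * (((∑' t : ℕ, β ^ t * (p1 (σ t) : ℝ)) +
              (∑' t : ℕ, β ^ t * (p2 (σ t) : ℝ))) / 2) := by
            gcongr
            · exact_mod_cast Finset.le_sup' (fun y => p2 ((σ k).1, y)) (Finset.mem_univ b)
            · exact ih true
            · exact ih false
        _ ≤ ∑' t : ℕ, β ^ t * (p2 (σ t) : ℝ) := by rw [← htail k]; exact hone2 k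
    · exact le_refl _
  | devBoth k₁ a rest₁ k₂ b rest₂ ih₁ ih₂ =>
    intro role
    cases role
    · simp only [EU]
      calc (∑ t ∈ Finset.range k₂, β ^ t * (p2 (σ t) : ℝ)) + β ^ k₂ * (p2 ((σ k₂).1, b) : ℝ) +
            β ^ (k₂ + 1) * ((EU β p1 p2 σ rest₂ true + EU β p1 p2 σ rest₂ false) / 2)
          ≤ (∑ t ∈ Finset.range k₂, β ^ t * (p2 (σ t) : ℝ)) + β ^ k₂ * (d2 p2 (σ k₂) : ℝ) +
            β ^ (k₂ + 1) * (((∑' t : ℕ, β ^ t * (p1 (σ t) : ℝ)) +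
              (∑' t : ℕ, β ^ t * (p2 (σ t) : ℝ))) / 2) := by
            gcongr
            · exact_mod_cast Finset.le_sup' (fun y => p2 ((σ k₂).1, y)) (Finset.mem_univ b)
            · exact ih₂ true
            · exact ih₂ false
        _ ≤ ∑' t : ℕ, β ^ t * (p2 (σ t) : ℝ) := by rw [← htail k₂]; exact hone2 k₂
    · simp only [EU]
      calc (∑ t ∈ Finset.range k₁, β ^ t * (p1 (σ t) : ℝ)) + β ^ k₁ * (p1 (a, (σ k₁).2) : ℝ) +
            β ^ (k₁ + 1) * ((EU β p1 p2 σ rest₁ true + EU β p1 p2 σ rest₁ false) / 2)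
          ≤ (∑ t ∈ Finset.range k₁, β ^ t * (p1 (σ t) : ℝ)) + β ^ k₁ * (d1 p1 (σ k₁) : ℝ) +
            β ^ (k₁ + 1) * (((∑' t : ℕ, β ^ t * (p1 (σ t) : ℝ)) +
              (∑' t : ℕ, β ^ t * (p2 (σ t) : ℝ))) / 2) := by
            gcongr
            · exact_mod_cast Finset.le_sup' (fun x => p1 (x, (σ k₁).2)) (Finset.mem_univ a)
            · exact ih₁ true
            · exact ih₁ false
        _ ≤ ∑' t : ℕ, β ^ t * (p1 (σ t) : ℝ) := by rw [← htail k₁]; exact hone1 k₁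


end Stmt18
end
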